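/- arXiv:math/0511200 — 5 statements merged into one kernel-verified Lean document; each statement's English description precedes it below -/
import Mathlib

section
/- Let K⟨A⟩⁺ be the span of the nonempty words inside the free associative ℚ-algebra on countably many generators a_1, a_2, … indexed by a linearly ordered set, and for nonempty words u, v define the bilinear operations: u≺v := uv if max(u) > max(v) and 0 otherwise; u∘v := uv if max(u) = max(v) and 0 otherwise; u≻v := uv if max(u) < max(v) and 0 otherwise (where max(w) is the largest letter occurring in w, and uv is concatenation). Then these three operations make K⟨A⟩⁺ a dendriform trialgebra: writing x⊙y := x≺y + x∘y + x≻y (the concatenation product), for all x, y, z in K⟨A⟩⁺ one has (x≺y)≺z = x≺(y⊙z), (x≻y)≺z = x≻(y≺z), (x⊙y)≻z = x≻(y≻z), (x≻y)∘z = x≻(y∘z), (x≺y)∘z = x∘(y≻z), (x∘y)≺z = x∘(y≺z), and (x∘y)∘z = x∘(y∘z). -/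
/-- The type of nonempty words over the infinite totally ordered alphabet
`a₀ < a₁ < a₂ < ⋯` (letters indexed by `ℕ`). -/
abbrev NEWord := {w : List ℕ // w ≠ []}

/-- `K⟨A⟩⁺`: the span of the nonempty words, i.e. the free `ℚ`-module with basis
the nonempty words (the augmentation ideal of the free associative algebra). -/
abbrev FreeAPlus := NEWord →₀ ℚ

/-- The greatest letter occurring in a word. -/
def maxLetter (w : List ℕ) : ℕ := w.foldr max 0

/-- Concatenation of nonempty words. -/
def catNE (u v : NEWord) : NEWord :=
  ⟨u.1 ++ v.1, by
    intro h
    exact u.2 (List.append_eq_nil_iff.mp h).1⟩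

/-- `u ≺ v := uv` if `max u > max v`, and `0` otherwise (on basis words). -/
noncomputable def precB (u v : NEWord) : FreeAPlus :=
  if maxLetter v.1 < maxLetter u.1 then Finsupp.single (catNE u v) 1 else 0

/-- `u ∘ v := uv` if `max u = max v`, and `0` otherwise (on basis words). -/
noncomputable def midB (u v : NEWord) : FreeAPlus :=
  if maxLetter u.1 = maxLetter v.1 then Finsupp.single (catNE u v) 1 else 0

/-- `u ≻ v := uv` if `max u < max v`, and `0` otherwise (on basis words). -/
noncomputable def succB (u v : NEWord) : FreeAPlus :=
  if maxLetter u.1 < maxLetter v.1 then Finsupp.single (catNE u v) 1 else 0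

/-- Bilinear extension of an operation given on basis words. -/
noncomputable def bilin (f : NEWord → NEWord → FreeAPlus) (x y : FreeAPlus) : FreeAPlus :=
  x.sum fun u cu => y.sum fun v cv => (cu * cv) • f u v

/-- The left operation `≺` of `K⟨A⟩⁺`. -/
noncomputable def tprec : FreeAPlus → FreeAPlus → FreeAPlus := bilin precB

/-- The middle operation `∘` of `K⟨A⟩⁺`. -/
noncomputable def tmid : FreeAPlus → FreeAPlus → FreeAPlus := bilin midB

/-- The right operation `≻` of `K⟨A⟩⁺`. -/
noncomputable def tsucc : FreeAPlus → FreeAPlus → FreeAPlus := bilin succB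

/-- The concatenation product of `K⟨A⟩⁺`. -/
noncomputable def tmul : FreeAPlus → FreeAPlus → FreeAPlus :=
  bilin fun u v => Finsupp.single (catNE u v) 1

/-! ### Auxiliary lemmas -/

lemma foldr_max_eq (l : List ℕ) (b : ℕ) : l.foldr max b = max (l.foldr max 0) b := by
  induction l with
  | nil => simp
  | cons a t ih => simp only [List.foldr, ih]; omega

lemma maxLetter_append (u v : List ℕ) :
    maxLetter (u ++ v) = max (maxLetter u) (maxLetter v) := by
  unfold maxLetter
  rw [List.foldr_append, foldr_max_eq]

lemma maxLetter_catNE (u v : NEWord) :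
    maxLetter (catNE u v).1 = max (maxLetter u.1) (maxLetter v.1) :=
  maxLetter_append u.1 v.1

lemma catNE_assoc (u v w : NEWord) : catNE (catNE u v) w = catNE u (catNE v w) := by
  apply Subtype.ext
  simp [catNE, List.append_assoc]

lemma bilin_zero_left (f : NEWord → NEWord → FreeAPlus) (y : FreeAPlus) :
    bilin f 0 y = 0 := Finsupp.sum_zero_index

lemma bilin_zero_right (f : NEWord → NEWord → FreeAPlus) (x : FreeAPlus) :
    bilin f x 0 = 0 := by
  unfold bilin
  simp [Finsupp.sum_zero_index]

lemma bilin_add_left (f : NEWord → NEWord → FreeAPlus) (x x' y : FreeAPlus) :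
    bilin f (x + x') y = bilin f x y + bilin f x' y := by
  unfold bilin
  apply Finsupp.sum_add_index'
  · intro u; simp
  · intro u c c'
    rw [← Finsupp.sum_add]
    exact Finsupp.sum_congr fun v _ => by rw [add_mul, add_smul]

lemma bilin_add_right (f : NEWord → NEWord → FreeAPlus) (x y y' : FreeAPlus) :
    bilin f x (y + y') = bilin f x y + bilin f x y' := by
  unfold bilin
  rw [← Finsupp.sum_add]
  exact Finsupp.sum_congr fun u _ =>
    Finsupp.sum_add_index' (fun v => by simp)
      (fun v c c' => by rw [mul_add, add_smul])

lemma bilin_smul_left (f : NEWord → NEWord → FreeAPlus) (c : ℚ) (x y : FreeAPlus) :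
    bilin f (c • x) y = c • bilin f x y := by
  unfold bilin
  rw [Finsupp.smul_sum, Finsupp.sum_smul_index' (fun u => by simp)]
  exact Finsupp.sum_congr fun u _ => by
    rw [Finsupp.smul_sum]
    exact Finsupp.sum_congr fun v _ => by
      rw [smul_eq_mul, mul_assoc, mul_smul]

lemma bilin_smul_right (f : NEWord → NEWord → FreeAPlus) (c : ℚ) (x y : FreeAPlus) :
    bilin f x (c • y) = c • bilin f x y := by
  unfold bilin
  rw [Finsupp.smul_sum]
  exact Finsupp.sum_congr fun u _ => by
    rw [Finsupp.smul_sum, Finsupp.sum_smul_index' (fun v => by simp)]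
    exact Finsupp.sum_congr fun v _ => by
      rw [smul_eq_mul, mul_left_comm, mul_smul]

lemma bilin_single_single (f : NEWord → NEWord → FreeAPlus) (u v : NEWord) (c d : ℚ) :
    bilin f (Finsupp.single u c) (Finsupp.single v d) = (c * d) • f u v := by
  unfold bilin
  rw [Finsupp.sum_single_index (by simp), Finsupp.sum_single_index (by simp)]

lemma bilin_ite_left (f : NEWord → NEWord → FreeAPlus) (P : Prop) [Decidable P]
    (x y : FreeAPlus) :
    bilin f (if P then x else 0) y = if P then bilin f x y else 0 := by
  split <;> simp [bilin_zero_left]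

lemma bilin_ite_right (f : NEWord → NEWord → FreeAPlus) (P : Prop) [Decidable P]
    (x y : FreeAPlus) :
    bilin f x (if P then y else 0) = if P then bilin f x y else 0 := by
  split <;> simp [bilin_zero_right]

lemma single_eq_smul_one (w : NEWord) (e : ℚ) :
    (Finsupp.single w e : FreeAPlus) = e • Finsupp.single w 1 := by
  rw [Finsupp.smul_single, smul_eq_mul, mul_one]

lemma bilin_f_add (f g : NEWord → NEWord → FreeAPlus) (x y : FreeAPlus) :
    bilin (fun u v => f u v + g u v) x y = bilin f x y + bilin g x y := by
  unfold bilin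
  rw [← Finsupp.sum_add]
  exact Finsupp.sum_congr fun u _ => by
    rw [← Finsupp.sum_add]
    exact Finsupp.sum_congr fun v _ => smul_add _ _ _

/-- Master trilinearity lemma: checking the composite relations on basis words suffices. -/
lemma trilin_ext (A B C D : NEWord → NEWord → FreeAPlus)
    (h : ∀ u v w : NEWord,
      bilin A (B u v) (Finsupp.single w 1) = bilin C (Finsupp.single u 1) (D v w)) :
    ∀ x y z : FreeAPlus, bilin A (bilin B x y) z = bilin C x (bilin D y z) := by
  intro x y z
  induction x using Finsupp.induction_linear with
  | zero => simp [bilin_zero_left]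
  | add x₁ x₂ h₁ h₂ => simp [bilin_add_left, h₁, h₂]
  | single u c =>
    induction y using Finsupp.induction_linear with
    | zero => simp [bilin_zero_left, bilin_zero_right]
    | add y₁ y₂ h₁ h₂ => simp [bilin_add_left, bilin_add_right, h₁, h₂]
    | single v d =>
      induction z using Finsupp.induction_linear with
      | zero => simp [bilin_zero_right]
      | add z₁ z₂ h₁ h₂ => simp [bilin_add_right, h₁, h₂]
      | single w e =>
        rw [bilin_single_single, bilin_single_single, bilin_smul_left, bilin_smul_right,
          single_eq_smul_one w e, single_eq_smul_one u c, bilin_smul_right, bilin_smul_left,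
          h u v w, smul_smul, smul_smul, show c * d * e = d * e * c by ring]

lemma key1 (u v : NEWord) :
    precB u v + midB u v + succB u v = Finsupp.single (catNE u v) 1 := by
  unfold precB midB succB
  split_ifs <;> first | (exfalso; omega) | simp

lemma key2 (u v w : NEWord) :
    bilin precB (precB u v) (Finsupp.single w 1)
      = bilin precB (Finsupp.single u 1) (Finsupp.single (catNE v w) 1) := by
  simp only [precB, bilin_ite_left, bilin_single_single, one_mul, one_smul,
    maxLetter_catNE, catNE_assoc]
  split_ifs <;> first | rfl | (exfalso; omega)

lemma key3 (u v w : NEWord) :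
    bilin precB (succB u v) (Finsupp.single w 1)
      = bilin succB (Finsupp.single u 1) (precB v w) := by
  simp only [precB, succB, bilin_ite_left, bilin_ite_right, bilin_single_single,
    one_mul, one_smul, maxLetter_catNE, catNE_assoc]
  split_ifs <;> first | rfl | (exfalso; omega)

lemma key4 (u v w : NEWord) :
    bilin succB (Finsupp.single (catNE u v) 1) (Finsupp.single w 1)
      = bilin succB (Finsupp.single u 1) (succB v w) := by
  simp only [succB, bilin_ite_right, bilin_single_single, one_mul, one_smul,
    maxLetter_catNE, catNE_assoc]
  split_ifs <;> first | rfl | (exfalso; omega)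

lemma key5 (u v w : NEWord) :
    bilin midB (succB u v) (Finsupp.single w 1)
      = bilin succB (Finsupp.single u 1) (midB v w) := by
  simp only [midB, succB, bilin_ite_left, bilin_ite_right, bilin_single_single,
    one_mul, one_smul, maxLetter_catNE, catNE_assoc]
  split_ifs <;> first | rfl | (exfalso; omega)

lemma key6 (u v w : NEWord) :
    bilin midB (precB u v) (Finsupp.single w 1)
      = bilin midB (Finsupp.single u 1) (succB v w) := by
  simp only [midB, precB, succB, bilin_ite_left, bilin_ite_right, bilin_single_single,
    one_mul, one_smul, maxLetter_catNE, catNE_assoc]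
  split_ifs <;> first | rfl | (exfalso; omega)

lemma key7 (u v w : NEWord) :
    bilin precB (midB u v) (Finsupp.single w 1)
      = bilin midB (Finsupp.single u 1) (precB v w) := by
  simp only [midB, precB, bilin_ite_left, bilin_ite_right, bilin_single_single,
    one_mul, one_smul, maxLetter_catNE, catNE_assoc]
  split_ifs <;> first | rfl | (exfalso; omega)

lemma key8 (u v w : NEWord) :
    bilin midB (midB u v) (Finsupp.single w 1)
      = bilin midB (Finsupp.single u 1) (midB v w) := by
  simp only [midB, bilin_ite_left, bilin_ite_right, bilin_single_single,
    one_mul, one_smul, maxLetter_catNE, catNE_assoc]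
  split_ifs <;> first | rfl | (exfalso; omega)

/-- The operations `≺`, `∘`, `≻` endow the augmentation ideal `K⟨A⟩⁺` of the free
associative algebra with the structure of a dendriform trialgebra: their sum is the
concatenation product `⊙`, and the seven dendriform trialgebra relations hold. -/
theorem freeAlgebra_dendriform_trialgebra :
    (∀ x y : FreeAPlus, tprec x y + tmid x y + tsucc x y = tmul x y) ∧
    (∀ x y z : FreeAPlus, tprec (tprec x y) z = tprec x (tmul y z)) ∧
    (∀ x y z : FreeAPlus, tprec (tsucc x y) z = tsucc x (tprec y z)) ∧
    (∀ x y z : FreeAPlus, tsucc (tmul x y) z = tsucc x (tsucc y z)) ∧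
    (∀ x y z : FreeAPlus, tmid (tsucc x y) z = tsucc x (tmid y z)) ∧
    (∀ x y z : FreeAPlus, tmid (tprec x y) z = tmid x (tsucc y z)) ∧
    (∀ x y z : FreeAPlus, tprec (tmid x y) z = tmid x (tprec y z)) ∧
    (∀ x y z : FreeAPlus, tmid (tmid x y) z = tmid x (tmid y z)) := by
  refine ⟨?_, ?_, ?_, ?_, ?_, ?_, ?_, ?_⟩
  · intro x y
    show bilin precB x y + bilin midB x y + bilin succB x y
        = bilin (fun u v => Finsupp.single (catNE u v) 1) x y
    rw [← bilin_f_add, ← bilin_f_add]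
    exact congrFun (congrFun (congrArg bilin
      (funext fun u => funext fun v => key1 u v)) x) y
  · exact trilin_ext precB precB precB (fun u v => Finsupp.single (catNE u v) 1) key2
  · exact trilin_ext precB succB succB precB key3
  · exact trilin_ext succB (fun u v => Finsupp.single (catNE u v) 1) succB succB key4
  · exact trilin_ext midB succB succB midB key5
  · exact trilin_ext midB precB midB succB key6
  · exact trilin_ext precB midB midB precB key7
  · exact trilin_ext midB midB midB midB key8
end

section
/- Fix n ≥ 1. For parking functions a, b of length n, define a*b := Park(w), where w is the word of length n with letters w_i := n·(a_i − 1) + b_i (an order-isomorphic encoding of the biletters (a_i, b_i) under lexicographic order). Then a*b is again a parking function of length n, and * is an associative operation on PF_n: (a*b)*c = a*(b*c) for all parking functions a, b, c of length n. -/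
/-- A word over the positive integers is a parking function if, for every
`i` with `1 ≤ i ≤ n` (where `n` is its length), at least `i` of its letters
are `≤ i`; this is equivalent to the condition that its nondecreasing
rearrangement `a'` satisfies `a'ᵢ ≤ i` for all `i`. -/
def IsParkingFunction (w : List ℕ) : Prop :=
  (∀ x ∈ w, 1 ≤ x) ∧
  ∀ i : ℕ, 1 ≤ i → i ≤ w.length → i ≤ (w.filter (fun x => x ≤ i)).length

/-- `dpark w` is the smallest `i ≥ 1` such that fewer than `i` letters of `w`
are `≤ i`; it equals `w.length + 1` when no such `i ≤ w.length` exists. -/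
def dpark (w : List ℕ) : ℕ :=
  Nat.find (p := fun i => (w.filter (fun x => x ≤ i)).length < i)
    ⟨w.length + 1, Nat.lt_succ_of_le (List.length_filter_le _ _)⟩

/-- Auxiliary fuelled version of parkization; each non-terminal step strictly
decreases the sum of the letters, so fuel `w.sum` always suffices. -/
def parkAux : ℕ → List ℕ → List ℕ
  | 0, w => w
  | fuel + 1, w =>
    if dpark w = w.length + 1 then w
    else parkAux fuel (w.map fun x => if dpark w < x then x - 1 else x)

/-- The parkization `Park w` of a word `w`: if `dpark w = w.length + 1`, return `w`;
otherwise decrement every letter strictly greater than `dpark w` by one and repeat. -/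
def park (w : List ℕ) : List ℕ := parkAux w.sum w

/-- The internal product on parking functions of length `n`:
`a * b := Park w`, where `w` is the word with letters `wᵢ = n·(aᵢ - 1) + bᵢ`,
an order-isomorphic encoding of the biletters `(aᵢ, bᵢ)` under lexicographic
order (the letters of a parking function of length `n` lie in `{1,…,n}`). -/
def iprod (n : ℕ) (a b : List ℕ) : List ℕ :=
  park (List.zipWith (fun x y => n * (x - 1) + y) a b)

/- ## helpers -/

def cnt (w : List ℕ) (s : ℕ) : ℕ := (w.filter (fun x => x ≤ s)).length

lemma cnt_eq_countP (w : List ℕ) (s : ℕ) : cnt w s = w.countP (fun x => x ≤ s) :=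
  List.countP_eq_length_filter.symm

lemma cnt_mono (w : List ℕ) {s t : ℕ} (h : s ≤ t) : cnt w s ≤ cnt w t := by
  rw [cnt_eq_countP, cnt_eq_countP]
  exact List.countP_mono_left (fun x _ hx => by simp_all; omega)

lemma cnt_le_length (w : List ℕ) (s : ℕ) : cnt w s ≤ w.length :=
  List.length_filter_le _ _

lemma countP_or_le {α : Type*} (l : List α) (p q : α → Bool) :
    l.countP (fun x => p x || q x) ≤ l.countP p + l.countP q := by
  induction l with
  | nil => simp
  | cons a l ih =>
    simp only [List.countP_cons]
    cases hp : p a <;> cases hq : q a <;> simp [hp, hq] <;> omega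

lemma countP_or_eq {α : Type*} (l : List α) (p q : α → Bool)
    (hdisj : ∀ x ∈ l, ¬(p x ∧ q x)) :
    l.countP (fun x => p x || q x) = l.countP p + l.countP q := by
  induction l with
  | nil => simp
  | cons a l ih =>
    have ha := hdisj a (by simp)
    have ih' := ih (fun x hx => hdisj x (by simp [hx]))
    simp only [List.countP_cons]
    cases hp : p a <;> cases hq : q a <;> simp [hp, hq] at ha ⊢ <;> omega

lemma countP_partition {α : Type*} (l : List α) (p q : α → Bool) :
    l.countP p = l.countP (fun x => p x && q x) + l.countP (fun x => p x && !q x) := by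
  induction l with
  | nil => simp
  | cons a l ih =>
    simp only [List.countP_cons]
    cases hp : p a <;> cases hq : q a <;> simp [hp, hq] <;> omega

lemma cnt_eq_length_iff (w : List ℕ) (s : ℕ) : cnt w s = w.length ↔ ∀ x ∈ w, x ≤ s := by
  rw [cnt_eq_countP, List.countP_eq_length]
  simp

lemma cnt_zero_of_pos (w : List ℕ) (hw : ∀ x ∈ w, 1 ≤ x) : cnt w 0 = 0 := by
  rw [cnt_eq_countP]
  rw [List.countP_eq_zero]
  intro x hx
  have := hw x hx
  simp; omega

lemma cnt_split (w : List ℕ) {s t : ℕ} (h : s ≤ t) :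
    cnt w t = cnt w s + w.countP (fun x => s < x && x ≤ t) := by
  rw [cnt_eq_countP, cnt_eq_countP, countP_partition w (fun x => x ≤ t) (fun x => x ≤ s)]
  congr 1
  · exact List.countP_congr (fun x _ => by simp; omega)
  · exact List.countP_congr (fun x _ => by simp; omega)

lemma countP_not (w : List ℕ) (p : ℕ → Bool) :
    w.countP (fun x => !(p x)) = w.length - w.countP p := by
  induction w with
  | nil => simp
  | cons a l ih =>
    have h : l.countP p ≤ l.length := List.countP_le_length
    simp only [List.countP_cons, List.length_cons]
    cases hp : p a <;> simp [hp] <;> omega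

/-- number of letters exceeding `s` -/
lemma countP_gt (w : List ℕ) (s : ℕ) :
    w.countP (fun x => s < x) = w.length - cnt w s := by
  rw [cnt_eq_countP, ← countP_not w (fun x => x ≤ s)]
  exact List.countP_congr (fun x _ => by simp)

/- ## pk : closed formula for parkization -/

def drop1 (w : List ℕ) (v : ℕ) : ℕ := (Finset.range v).sup (fun s => s - cnt w s)

def pk (w : List ℕ) : List ℕ := w.map (fun v => v - drop1 w v)

lemma drop1_le (w : List ℕ) (v : ℕ) : drop1 w v ≤ v - 1 := by
  apply Finset.sup_le
  intro s hs
  simp only [Finset.mem_range] at hs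
  omega

lemma pk_length (w : List ℕ) : (pk w).length = w.length := by simp [pk]

lemma pk_pos (w : List ℕ) (hw : ∀ x ∈ w, 1 ≤ x) : ∀ x ∈ pk w, 1 ≤ x := by
  intro x hx
  obtain ⟨v, hv, rfl⟩ := List.mem_map.1 hx
  have h1 := hw v hv
  have h2 := drop1_le w v
  omega

/-- The key "gap removal" lemma: removing an empty level `l` whose deficiency
strictly dominates all deficiencies below it does not change `pk`. -/
lemma gap1 (w : List ℕ) (l : ℕ)
    (h2 : cnt w l + 1 ≤ l)
    (h3 : ∀ x ∈ w, x ≠ l)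
    (h4 : ∀ s, s < l → s - cnt w s < l - cnt w l) :
    pk w = pk (w.map fun v => if l < v then v - 1 else v) := by
  set g : ℕ → ℕ := fun v => if l < v then v - 1 else v with hg
  set w' := w.map g with hw'
  -- counts of w'
  have hclo : ∀ s, s < l → cnt w' s = cnt w s := by
    intro s hs
    rw [cnt_eq_countP, hw', List.countP_map, cnt_eq_countP]
    apply List.countP_congr
    intro x hx
    have hxl := h3 x hx
    simp only [Function.comp, hg]
    by_cases hlx : l < x <;> simp [hlx] <;> omega
  have hchi : ∀ s, l ≤ s → cnt w' s = cnt w (s + 1) := by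
    intro s hs
    rw [cnt_eq_countP, hw', List.countP_map, cnt_eq_countP]
    apply List.countP_congr
    intro x hx
    have hxl := h3 x hx
    simp only [Function.comp, hg]
    by_cases hlx : l < x <;> simp [hlx] <;> omega
  have hcll : cnt w (l - 1) = cnt w l := by
    have h := cnt_split w (show l - 1 ≤ l by omega)
    have : w.countP (fun x => l - 1 < x && x ≤ l) = 0 := by
      rw [List.countP_eq_zero]
      intro x hx
      have := h3 x hx
      simp; omega
    omega
  have hpk' : pk w' = w.map (fun v => g v - drop1 w' (g v)) := by
    rw [pk, hw', List.map_map, ← hw']; rfl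
  rw [pk, hpk']
  apply List.map_congr_left
  intro v hv
  have hvl := h3 v hv
  by_cases hlv : l < v
  · -- big letters: drop1 w v = drop1 w' (v-1) + 1
    have hgv : g v = v - 1 := if_pos hlv
    rw [hgv]
    have hDge : l - cnt w l ≤ drop1 w v := by
      apply Finset.le_sup (f := fun s => s - cnt w s)
      simp only [Finset.mem_range]; omega
    have key : drop1 w v = drop1 w' (v - 1) + 1 := by
      apply le_antisymm
      · apply Finset.sup_le
        intro s hs
        simp only [Finset.mem_range] at hs
        have hterm : l - 1 - cnt w' (l - 1) = l - cnt w l - 1 := by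
          rw [hclo (l - 1) (by omega), hcll]; omega
        have hmem : l - 1 - cnt w' (l - 1) ≤ drop1 w' (v - 1) := by
          apply Finset.le_sup (f := fun s => s - cnt w' s)
          simp only [Finset.mem_range]; omega
        rcases lt_trichotomy s l with hsl | rfl | hsl
        · have := h4 s hsl
          omega
        · omega
        · -- l < s < v
          by_cases hcs : cnt w s ≤ s - 1
          · have hm2 : s - 1 - cnt w' (s - 1) ≤ drop1 w' (v - 1) := by
              apply Finset.le_sup (f := fun s => s - cnt w' s)
              simp only [Finset.mem_range]; omega
            rw [hchi (s - 1) (by omega)] at hm2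
            have hss : s - 1 + 1 = s := by omega
            rw [hss] at hm2
            omega
          · omega
      · have hne : (Finset.range (v - 1)).Nonempty := by
          rw [Finset.nonempty_range_iff]; omega
        obtain ⟨s₀, hs₀mem, hs₀⟩ := Finset.exists_mem_eq_sup _ hne (fun s => s - cnt w' s)
        simp only [Finset.mem_range] at hs₀mem
        have hD' : drop1 w' (v - 1) = s₀ - cnt w' s₀ := hs₀
        rcases lt_or_ge s₀ l with hsl | hsl
        · have h4' := h4 s₀ hsl
          have hcc := hclo s₀ hsl
          omega
        · have hc := hchi s₀ hsl
          by_cases hcs : cnt w (s₀ + 1) ≤ s₀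
          · have hle : (s₀ + 1) - cnt w (s₀ + 1) ≤ drop1 w v := by
              apply Finset.le_sup (f := fun s => s - cnt w s)
              simp only [Finset.mem_range]; omega
            omega
          · omega
    omega
  · have hgv : g v = v := if_neg hlv
    rw [hgv]
    have : drop1 w' v = drop1 w v := by
      apply Finset.sup_congr rfl
      intro s hs
      simp only [Finset.mem_range] at hs
      rw [hclo s (by omega)]
    rw [this]

/- ## dpark facts -/

lemma dpark_spec (w : List ℕ) : cnt w (dpark w) < dpark w :=
  Nat.find_spec (p := fun i => (w.filter (fun x => x ≤ i)).length < i)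
    ⟨w.length + 1, Nat.lt_succ_of_le (List.length_filter_le _ _)⟩

lemma dpark_min (w : List ℕ) {s : ℕ} (h : s < dpark w) : s ≤ cnt w s := by
  have := Nat.find_min (p := fun i => (w.filter (fun x => x ≤ i)).length < i)
    ⟨w.length + 1, Nat.lt_succ_of_le (List.length_filter_le _ _)⟩ h
  simp only [not_lt] at this
  exact this

lemma dpark_le (w : List ℕ) : dpark w ≤ w.length + 1 :=
  Nat.find_min' _ (Nat.lt_succ_of_le (List.length_filter_le _ _))

lemma dpark_pos (w : List ℕ) : 1 ≤ dpark w := by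
  rcases Nat.eq_zero_or_pos (dpark w) with h | h
  · have := dpark_spec w; omega
  · exact h

lemma no_letter_at (w : List ℕ) {d : ℕ} (hd : 1 ≤ d) (h1 : cnt w d + 1 ≤ d)
    (h2 : d - 1 ≤ cnt w (d - 1)) : ∀ x ∈ w, x ≠ d := by
  intro x hx hxd
  have hsplit := cnt_split w (show d - 1 ≤ d by omega)
  have : 0 < w.countP (fun y => d - 1 < y && y ≤ d) := by
    rw [List.countP_pos_iff]
    exact ⟨x, hx, by simp [hxd]; omega⟩
  omega

lemma dpark_no_letter (w : List ℕ) (h : dpark w ≠ w.length + 1) :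
    ∀ x ∈ w, x ≠ dpark w := by
  apply no_letter_at w (dpark_pos w) (by have := dpark_spec w; omega)
  exact dpark_min w (by have := dpark_pos w; omega)

/-- small letters below the minimal deficiency don't move; pk equals pk of the step -/
lemma pk_step (w : List ℕ) (h : dpark w ≠ w.length + 1) :
    pk w = pk (w.map fun x => if dpark w < x then x - 1 else x) := by
  apply gap1
  · have := dpark_spec w; omega
  · exact dpark_no_letter w h
  · intro s hs
    have h1 := dpark_min w hs
    have h2 := dpark_spec w
    omega

lemma letters_le_length (w : List ℕ) (h : dpark w = w.length + 1) :
    ∀ x ∈ w, x ≤ w.length := by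
  have hc : cnt w w.length = w.length := by
    have h1 : w.length ≤ cnt w (w.length) := dpark_min w (by omega)
    have h2 := cnt_le_length w w.length
    omega
  exact (cnt_eq_length_iff w w.length).1 hc

lemma pk_fixed (w : List ℕ) (h : dpark w = w.length + 1) : pk w = w := by
  have hle := letters_le_length w h
  rw [pk]
  have : ∀ v ∈ w, v - drop1 w v = v := by
    intro v hv
    have hD : drop1 w v = 0 := by
      apply Nat.eq_zero_of_le_zero
      apply Finset.sup_le
      intro s hs
      simp only [Finset.mem_range] at hs
      have hsv := hle v hv
      have := dpark_min w (show s < dpark w by omega)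
      omega
    omega
  rw [List.map_congr_left this, List.map_id']

lemma parkAux_fixed (fuel : ℕ) (w : List ℕ) (h : dpark w = w.length + 1) :
    parkAux fuel w = w := by
  cases fuel with
  | zero => rfl
  | succ f => rw [parkAux, if_pos h]

lemma map_sum_le (l : List ℕ) (f : ℕ → ℕ) (h : ∀ y, f y ≤ y) : (l.map f).sum ≤ l.sum := by
  induction l with
  | nil => simp
  | cons a t ih => simp only [List.map_cons, List.sum_cons]; have := h a; omega

lemma sum_step_lt (w : List ℕ) (d : ℕ) (hex : ∃ x ∈ w, d < x) :
    (w.map fun x => if d < x then x - 1 else x).sum < w.sum := by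
  induction w with
  | nil => simp at hex
  | cons a l ih =>
    obtain ⟨x, hx, hdx⟩ := hex
    simp only [List.map_cons, List.sum_cons]
    rcases List.mem_cons.1 hx with rfl | hxl
    · have hmaple : (l.map fun x => if d < x then x - 1 else x).sum ≤ l.sum := by
        apply map_sum_le
        intro y
        by_cases h : d < y <;> simp [h]
      rw [if_pos hdx]
      omega
    · have := ih ⟨x, hxl, hdx⟩
      by_cases h : d < a <;> simp [h] <;> omega

lemma exists_letter_gt (w : List ℕ) (d : ℕ) (h : cnt w d < w.length) :
    ∃ x ∈ w, d < x := by
  by_contra hc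
  push_neg at hc
  have : cnt w d = w.length := (cnt_eq_length_iff w d).2 hc
  omega

lemma step_letters_pos (w : List ℕ) (hw : ∀ x ∈ w, 1 ≤ x) (d : ℕ) (hd : 1 ≤ d) :
    ∀ x ∈ w.map fun x => if d < x then x - 1 else x, 1 ≤ x := by
  intro x hx
  obtain ⟨y, hy, rfl⟩ := List.mem_map.1 hx
  have := hw y hy
  by_cases h : d < y <;> simp [h] <;> omega

lemma parkAux_eq_pk : ∀ (fuel : ℕ) (w : List ℕ), w.sum ≤ fuel → (∀ x ∈ w, 1 ≤ x) →
    parkAux fuel w = pk w := by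
  intro fuel
  induction fuel with
  | zero =>
    intro w hsum hw
    have : w = [] := by
      cases w with
      | nil => rfl
      | cons a l =>
        have := hw a (by simp)
        simp only [List.sum_cons] at hsum
        omega
    subst this; rfl
  | succ f ih =>
    intro w hsum hw
    by_cases h : dpark w = w.length + 1
    · rw [parkAux_fixed _ _ h, pk_fixed _ h]
    · rw [parkAux, if_neg h]
      have hdle : dpark w ≤ w.length := by have := dpark_le w; omega
      have hex : ∃ x ∈ w, dpark w < x := by
        apply exists_letter_gt
        have := dpark_spec w; omega
      have hlt := sum_step_lt w (dpark w) hex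
      rw [ih _ (by omega) (step_letters_pos w hw _ (dpark_pos w))]
      exact (pk_step w h).symm

lemma park_eq_pk (w : List ℕ) (hw : ∀ x ∈ w, 1 ≤ x) : park w = pk w :=
  parkAux_eq_pk _ w le_rfl hw

lemma park_step (w : List ℕ) (hw : ∀ x ∈ w, 1 ≤ x) (h : dpark w ≠ w.length + 1) :
    park w = park (w.map fun x => if dpark w < x then x - 1 else x) := by
  rw [park_eq_pk w hw, park_eq_pk _ (step_letters_pos w hw _ (dpark_pos w)), ← pk_step w h]

lemma park_fixed (w : List ℕ) (h : dpark w = w.length + 1) : park w = w :=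
  parkAux_fixed _ w h

/- ## pk is a parking function -/

lemma drop1_succ_le (w : List ℕ) (v : ℕ) : drop1 w (v + 1) ≤ drop1 w v + 1 := by
  apply Finset.sup_le
  intro s hs
  simp only [Finset.mem_range] at hs
  rcases Nat.lt_or_ge s v with h | h
  · have : s - cnt w s ≤ drop1 w v := by
      apply Finset.le_sup (f := fun s => s - cnt w s)
      simp only [Finset.mem_range]; omega
    omega
  · have hsv : s = v := by omega
    subst hsv
    rcases Nat.eq_zero_or_pos s with rfl | hspos
    · omega
    · have h1 : s - 1 - cnt w (s - 1) ≤ drop1 w s := by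
        apply Finset.le_sup (f := fun s => s - cnt w s)
        simp only [Finset.mem_range]; omega
      have h2 : cnt w (s - 1) ≤ cnt w s := cnt_mono w (by omega)
      omega

lemma pkF_mono (w : List ℕ) : Monotone (fun v => v - drop1 w v) := by
  apply monotone_nat_of_le_succ
  intro v
  have h1 := drop1_succ_le w v
  have h2 : drop1 w v ≤ drop1 w (v + 1) := by
    apply Finset.sup_le
    intro s hs
    simp only [Finset.mem_range] at hs
    apply Finset.le_sup (f := fun s => s - cnt w s)
    simp only [Finset.mem_range]; omega
  show v - drop1 w v ≤ (v+1) - drop1 w (v+1)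
  omega

lemma cnt_big (w : List ℕ) (s : ℕ) (h : w.sum ≤ s) : cnt w s = w.length := by
  rw [cnt_eq_length_iff]
  intro x hx
  have : x ≤ w.sum := List.single_le_sum (fun y _ => Nat.zero_le y) x hx
  omega

lemma pkF_big (w : List ℕ) : w.length + 1 ≤
    (fun v => v - drop1 w v) (w.sum + w.length + 1) := by
  simp only
  have hD : drop1 w (w.sum + w.length + 1) ≤ w.sum := by
    apply Finset.sup_le
    intro s hs
    simp only [Finset.mem_range] at hs
    rcases Nat.lt_or_ge s (w.sum + 1) with h | h
    · omega
    · rw [cnt_big w s (by omega)]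
      omega
  omega

theorem pk_isPF (w : List ℕ) (hw : ∀ x ∈ w, 1 ≤ x) : IsParkingFunction (pk w) := by
  constructor
  · exact pk_pos w hw
  · intro i hi hilen
    rw [pk_length] at hilen
    set F : ℕ → ℕ := fun v => v - drop1 w v with hF
    -- find the threshold V
    have hex : ∃ m, i < F (m + 1) := by
      refine ⟨w.sum + w.length, ?_⟩
      have := pkF_big w
      rw [← hF] at this
      have h2 : w.sum + w.length + 1 = w.sum + (w.length + 1) := by omega
      omega
    set V := Nat.find hex with hV
    have hVspec : i < F (V + 1) := Nat.find_spec hex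
    have hFV : F V ≤ i := by
      rcases Nat.eq_zero_or_pos V with h0 | hpos
      · rw [h0]
        simp only [hF]
        omega
      · have := Nat.find_min hex (show V - 1 < V by omega)
        have hV1 : V - 1 + 1 = V := by omega
        rw [hV1] at this
        omega
    -- letters ≤ V are exactly those with F ≤ i
    have hiff : ∀ x ∈ w, (F x ≤ i ↔ x ≤ V) := by
      intro x _
      constructor
      · intro hFx
        by_contra hc
        have : F (V + 1) ≤ F x := pkF_mono w (by omega)
        omega
      · intro hxV
        have : F x ≤ F V := pkF_mono w hxV
        omega
    have hcount : cnt (pk w) i = cnt w V := by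
      rw [pk, cnt_eq_countP, List.countP_map, cnt_eq_countP]
      apply List.countP_congr
      intro x hx
      have := hiff x hx
      simp only [Function.comp, ← hF]
      simp only [decide_eq_true_eq]
      exact this
    rw [show (List.filter (fun x => x ≤ i) (pk w)).length = cnt (pk w) i from rfl, hcount]
    -- cnt w V ≥ i
    have hdrop : V - cnt w V ≤ drop1 w (V + 1) := by
      apply Finset.le_sup (f := fun s => s - cnt w s)
      simp only [Finset.mem_range]; omega
    simp only [hF] at hVspec
    omega

/- ## zip helpers -/

lemma zipWith_eq_map_zip {α β γ : Type*} (f : α → β → γ) (a : List α) (b : List β) :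
    List.zipWith f a b = (a.zip b).map (fun p => f p.1 p.2) := by
  induction a generalizing b with
  | nil => simp
  | cons x t ih =>
    cases b with
    | nil => simp
    | cons y u => simp [ih]

lemma countP_zip_fst {α β : Type*} (a : List α) (b : List β) (h : a.length = b.length)
    (p : α → Bool) : (a.zip b).countP (fun q => p q.1) = a.countP p := by
  induction a generalizing b with
  | nil => simp
  | cons x t ih =>
    cases b with
    | nil => simp at h
    | cons y u =>
      simp only [List.zip_cons_cons, List.countP_cons]
      rw [ih u (by simpa using h)]

lemma countP_zip_snd {α β : Type*} (a : List α) (b : List β) (h : a.length = b.length)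
    (p : β → Bool) : (a.zip b).countP (fun q => p q.2) = b.countP p := by
  induction a generalizing b with
  | nil => cases b with
    | nil => simp
    | cons y u => simp at h
  | cons x t ih =>
    cases b with
    | nil => simp at h
    | cons y u =>
      simp only [List.zip_cons_cons, List.countP_cons]
      rw [ih u (by simpa using h)]

lemma cnt_zipWith (f : ℕ → ℕ → ℕ) (a b : List ℕ) (s : ℕ) :
    cnt (List.zipWith f a b) s = (a.zip b).countP (fun p => f p.1 p.2 ≤ s) := by
  rw [zipWith_eq_map_zip, cnt_eq_countP, List.countP_map]
  rfl

lemma zipWith_congr_mem {α β γ : Type*} (f g : α → β → γ) (a : List α) (b : List β)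
    (h : ∀ p ∈ a.zip b, f p.1 p.2 = g p.1 p.2) :
    List.zipWith f a b = List.zipWith g a b := by
  rw [zipWith_eq_map_zip, zipWith_eq_map_zip]
  exact List.map_congr_left (fun p hp => h p hp)

lemma mem_zipWith' {α β γ : Type*} {f : α → β → γ} {a : List α} {b : List β}
    {x : γ} (hx : x ∈ List.zipWith f a b) : ∃ p ∈ a.zip b, x = f p.1 p.2 := by
  rw [zipWith_eq_map_zip] at hx
  obtain ⟨p, hp, rfl⟩ := List.mem_map.1 hx
  exact ⟨p, hp, rfl⟩

lemma zip_length {α β : Type*} (a : List α) (b : List β) (h : a.length = b.length) :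
    (a.zip b).length = a.length := by
  rw [List.length_zip]; omega

lemma mul_pred_add (n u : ℕ) (hu : 1 ≤ u) : n * (u - 1) + n = n * u := by
  cases u with
  | zero => omega
  | succ v => simp [Nat.mul_succ]

/- ## left step -/

lemma lstep (n d : ℕ) (hn : 1 ≤ n) (z c : List ℕ)
    (hzlen : z.length = n) (hclen : c.length = n)
    (hz1 : ∀ x ∈ z, 1 ≤ x)
    (hc1 : ∀ x ∈ c, 1 ≤ x ∧ x ≤ n)
    (hcP : ∀ r, 1 ≤ r → r ≤ n → r ≤ cnt c r)
    (hd1 : 1 ≤ d)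
    (hzd : cnt z d + 1 ≤ d)
    (hzmin : ∀ s, s < d → s ≤ cnt z s) :
    pk (List.zipWith (fun x y => n * (x - 1) + y) z c)
      = pk (List.zipWith (fun x y => n * (x - 1) + y)
          (z.map fun x => if d < x then x - 1 else x) c) := by
  have hlen : z.length = c.length := by omega
  have hznd : ∀ x ∈ z, x ≠ d := by
    apply no_letter_at z hd1 hzd
    exact hzmin (d - 1) (by omega)
  have hczd1 : cnt z (d - 1) = d - 1 := by
    have h1 := cnt_mono z (show d - 1 ≤ d by omega)
    have h2 := hzmin (d - 1) (by omega)
    omega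
  set l := n * (d - 1) + 1 with hl
  have hdnd : d - 1 ≤ n * (d - 1) := Nat.le_mul_of_pos_left _ hn
  set W : ℕ → List ℕ :=
    fun k => List.zipWith (fun x y => if d < x then n * (x - 1) + y - k else n * (x - 1) + y) z c
    with hW
  -- value facts
  have hsmall : ∀ p ∈ z.zip c, p.1 < d → n * (p.1 - 1) + p.2 ≤ n * (d - 1) := by
    intro p hp hpd
    obtain ⟨hp1, hp2⟩ := List.of_mem_zip hp
    have hy := hc1 p.2 hp2
    have hmul : n * (p.1 - 1) + n ≤ n * (d - 1) + n := by
      have : n * (p.1 - 1) ≤ n * (d - 1) := Nat.mul_le_mul_left n (by omega)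
      omega
    rcases Nat.eq_zero_or_pos (d - 1) with h0 | hpos
    · -- d = 1 : no small letters
      have := hz1 p.1 hp1; omega
    · have : n * (p.1 - 1) + n ≤ n * (d - 1) := by
        have h2 : n * (p.1 - 1 + 1) ≤ n * (d - 1) := Nat.mul_le_mul_left n (by omega)
        have h3 : n * (p.1 - 1 + 1) = n * (p.1 - 1) + n := by rw [Nat.mul_add]; omega
        omega
      omega
  have hbig : ∀ p ∈ z.zip c, d < p.1 → ∀ k, k < n →
      l < n * (p.1 - 1) + p.2 - k := by
    intro p hp hpd k hk
    obtain ⟨hp1, hp2⟩ := List.of_mem_zip hp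
    have hy := hc1 p.2 hp2
    have hmul : n * d ≤ n * (p.1 - 1) := Nat.mul_le_mul_left n (by omega)
    have hnd : n * d = n * (d - 1) + n := by
      have : n * (d - 1 + 1) = n * (d - 1) + n := by rw [Nat.mul_add]; omega
      rw [← this]; congr 1; omega
    omega
  -- counts at l
  have hcntl : ∀ k, k < n → cnt (W k) l = d - 1 := by
    intro k hk
    rw [hW, cnt_zipWith]
    apply le_antisymm
    · calc (z.zip c).countP (fun p => (if d < p.1 then n * (p.1 - 1) + p.2 - k
            else n * (p.1 - 1) + p.2) ≤ l)
          ≤ (z.zip c).countP (fun p => p.1 ≤ d - 1) := by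
            apply List.countP_mono_left
            intro p hp hval
            obtain ⟨hp1, _⟩ := List.of_mem_zip hp
            have hxd := hznd p.1 hp1
            simp only [decide_eq_true_eq] at hval ⊢
            by_contra hc
            have hpd : d < p.1 := by omega
            rw [if_pos hpd] at hval
            have := hbig p hp hpd k hk
            omega
      _ = cnt z (d - 1) := by
            rw [cnt_eq_countP]
            exact countP_zip_fst z c hlen (fun x => x ≤ d - 1)
      _ = d - 1 := hczd1
    · calc (d : ℕ) - 1 = cnt z (d - 1) := hczd1.symm
      _ = (z.zip c).countP (fun p => p.1 ≤ d - 1) := by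
            rw [cnt_eq_countP]
            exact (countP_zip_fst z c hlen (fun x => x ≤ d - 1)).symm
      _ ≤ _ := by
            apply List.countP_mono_left
            intro p hp hval
            simp only [decide_eq_true_eq] at hval ⊢
            have := hsmall p hp (by omega)
            rw [if_neg (by omega)]
            omega
  -- count lower bounds below l
  have hcnts : ∀ k, ∀ s, 1 ≤ s → s < l → s - cnt (W k) s < l - (d - 1) := by
    intro k s hs1 hsl
    -- decompose s = n*(u-1) + r
    obtain ⟨q, r0, hqr, hr0⟩ : ∃ q r0, s - 1 = n * q + r0 ∧ r0 < n :=
      ⟨(s - 1) / n, (s - 1) % n, (Nat.div_add_mod (s - 1) n).symm,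
        Nat.mod_lt _ (by omega)⟩
    set r := r0 + 1 with hr
    have hdiv : s = n * q + r := by omega
    have hrn : 1 ≤ r ∧ r ≤ n := by omega
    set u := q + 1 with hu
    have hud : u ≤ d - 1 := by
      by_contra hc
      have : d - 1 ≤ q := by omega
      have : n * (d - 1) ≤ n * q := Nat.mul_le_mul_left n this
      omega
    have hsdec : s = n * (u - 1) + r := by
      rw [hu]; simpa using hdiv
    -- cnt (W k) s + (n - cnt c r) ≥ cnt z u
    have hkey : cnt z u ≤ cnt (W k) s + (n - cnt c r) := by
      have step1 : (z.zip c).countP (fun p => p.1 ≤ u)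
          ≤ (z.zip c).countP (fun p => (p.1 ≤ u && p.2 ≤ r) || r < p.2) := by
        apply List.countP_mono_left
        intro p _ hp
        simp only [decide_eq_true_eq, Bool.or_eq_true, Bool.and_eq_true] at hp ⊢
        omega
      have step2 : (z.zip c).countP (fun p => (p.1 ≤ u && p.2 ≤ r) || r < p.2)
          ≤ (z.zip c).countP (fun p => p.1 ≤ u && p.2 ≤ r)
            + (z.zip c).countP (fun p => r < p.2) := countP_or_le _ _ _
      have step3 : (z.zip c).countP (fun p => p.1 ≤ u && p.2 ≤ r)
          ≤ cnt (W k) s := by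
        rw [hW, cnt_zipWith]
        apply List.countP_mono_left
        intro p hp hpred
        simp only [Bool.and_eq_true, decide_eq_true_eq] at hpred ⊢
        obtain ⟨hpu, hpr⟩ := hpred
        rw [if_neg (by omega)]
        have hmul : n * (p.1 - 1) ≤ n * (u - 1) := Nat.mul_le_mul_left n (by omega)
        omega
      have step4 : (z.zip c).countP (fun p => r < p.2) = n - cnt c r := by
        have e1 : (z.zip c).countP (fun p => r < p.2) = c.countP (fun y => r < y) :=
          countP_zip_snd z c hlen (fun y => r < y)
        rw [e1, countP_gt, hclen]
      have step5 : (z.zip c).countP (fun p => p.1 ≤ u) = cnt z u := by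
        rw [cnt_eq_countP]
        exact countP_zip_fst z c hlen (fun x => x ≤ u)
      omega
    have hzu := hzmin u (by omega)
    have hcr := hcP r hrn.1 hrn.2
    -- arithmetic
    have A1 : n * (u - 1) + n = n * u := mul_pred_add n u (by omega)
    have A5 : n * (d - 1) = n * u + n * ((d - 1) - u) := by
      rw [← Nat.mul_add]; congr 1; omega
    have A4 : (d - 1) - u ≤ n * ((d - 1) - u) := Nat.le_mul_of_pos_left _ hn
    omega
  -- one gap-removal step
  have hstep : ∀ k, k < n → pk (W k) = pk (W (k + 1)) := by
    intro k hk
    have hmap : (W k).map (fun v => if l < v then v - 1 else v) = W (k + 1) := by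
      rw [hW]
      simp only
      rw [List.map_zipWith]
      apply zipWith_congr_mem
      intro p hp
      obtain ⟨hp1, hp2⟩ := List.of_mem_zip hp
      have hxd := hznd p.1 hp1
      by_cases hpd : d < p.1
      · rw [if_pos hpd, if_pos hpd, if_pos (hbig p hp hpd k hk)]
        omega
      · have := hsmall p hp (by omega)
        rw [if_neg hpd, if_neg hpd, if_neg (by omega)]
    rw [← hmap]
    apply gap1
    · rw [hcntl k hk]; omega
    · intro x hx
      obtain ⟨p, hp, rfl⟩ := mem_zipWith' hx
      obtain ⟨hp1, hp2⟩ := List.of_mem_zip hp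
      have hxd := hznd p.1 hp1
      by_cases hpd : d < p.1
      · rw [if_pos hpd]
        have := hbig p hp hpd k hk
        omega
      · rw [if_neg hpd]
        have := hsmall p hp (by omega)
        omega
    · intro s hs
      rw [hcntl k hk]
      rcases Nat.eq_zero_or_pos s with rfl | hspos
      · simp; omega
      · exact hcnts k s hspos hs
  -- chain
  have hchain : ∀ k, k ≤ n → pk (W 0) = pk (W k) := by
    intro k
    induction k with
    | zero => intro _; rfl
    | succ m ih =>
      intro hm
      rw [ih (by omega), hstep m (by omega)]
  -- endpoints
  have hW0 : W 0 = List.zipWith (fun x y => n * (x - 1) + y) z c := by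
    rw [hW]
    apply zipWith_congr_mem
    intro p _
    by_cases hpd : d < p.1 <;> simp [hpd]
  have hWn : W n = List.zipWith (fun x y => n * (x - 1) + y)
      (z.map fun x => if d < x then x - 1 else x) c := by
    rw [hW, List.zipWith_map_left]
    apply zipWith_congr_mem
    intro p hp
    obtain ⟨hp1, hp2⟩ := List.of_mem_zip hp
    by_cases hpd : d < p.1
    · rw [if_pos hpd, if_pos hpd]
      have hmul : n * (p.1 - 1 - 1) + n = n * (p.1 - 1) := mul_pred_add n (p.1 - 1) (by omega)
      omega
    · rw [if_neg hpd, if_neg hpd]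
  rw [← hW0, ← hWn]
  exact hchain n le_rfl

/- ## right step -/

lemma rstep (n M e : ℕ) (a y : List ℕ)
    (hn : 1 ≤ n)
    (halen : a.length = n) (hylen : y.length = n)
    (ha1 : ∀ x ∈ a, 1 ≤ x ∧ x ≤ n)
    (hy1 : ∀ x ∈ y, 1 ≤ x)
    (hA : ∀ r, n - cnt y r ≤ M - r)
    (hnM : n ≤ M)
    (heM : e ≤ M)
    (he1 : 1 ≤ e)
    (hye : cnt y e + 1 ≤ e)
    (hymin : ∀ s, s < e → s ≤ cnt y s)
    (hyne : ∀ x ∈ y, x ≠ e) :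
    pk (List.zipWith (fun x w => M * (x - 1) + w) a y)
      = pk (List.zipWith (fun x w => (M - 1) * (x - 1) + (if e < w then w - 1 else w)) a y) := by
  have hlen : a.length = y.length := by omega
  have hyM : ∀ w ∈ y, w ≤ M := by
    have h0 := hA M
    have h1 := cnt_le_length y M
    have : cnt y M = y.length := by omega
    exact (cnt_eq_length_iff y M).1 this
  set V : ℕ → List ℕ := fun α => List.zipWith
      (fun x w => if x ≤ α then M * (x - 1) + w
        else M * (x - 1) + w - (x - 1 - α) - (if e < w then 1 else 0)) a y with hV
  -- value facts
  have VS2 : ∀ p ∈ a.zip y, ∀ γ : ℕ, p.1 ≤ γ → M * (p.1 - 1) + p.2 ≤ M * γ := by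
    intro p hp γ hγ
    obtain ⟨hp1, hp2⟩ := List.of_mem_zip hp
    have hw := hyM p.2 hp2
    have hx1 := (ha1 p.1 hp1).1
    have E1 : M * (p.1 - 1) + M = M * p.1 := mul_pred_add M p.1 hx1
    have E2 : M * p.1 ≤ M * γ := Nat.mul_le_mul_left M hγ
    omega
  have VB : ∀ p ∈ a.zip y, ∀ α : ℕ, 1 ≤ α → α < p.1 →
      M * (α - 1) + e < M * (p.1 - 1) + p.2 - (p.1 - 1 - α) - (if e < p.2 then 1 else 0) := by
    intro p hp α hα1 hαx
    obtain ⟨hp1, hp2⟩ := List.of_mem_zip hp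
    have hw1 := hy1 p.2 hp2
    have hwe := hyne p.2 hp2
    set k := p.1 - 1 - α with hk
    have E1 : M * (p.1 - 1) = M * (α - 1) + M * (k + 1) := by
      rw [← Nat.mul_add]; congr 1; omega
    have E2 : e * (k + 1) ≤ M * (k + 1) := Nat.mul_le_mul_right (k + 1) heM
    have E3 : e * (k + 1) = e * k + e := by rw [Nat.mul_add]; omega
    have E4 : k ≤ e * k := Nat.le_mul_of_pos_left _ he1
    by_cases hew : e < p.2 <;> simp only [hew, if_pos, if_neg, not_false_iff] <;> omega
  -- counts at the removal level
  have hcl : ∀ α, 1 ≤ α → α ≤ n →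
      cnt (V α) (M * (α - 1) + e) = cnt a (α - 1)
        + (a.zip y).countP (fun p => p.1 = α && p.2 ≤ e) := by
    intro α hα1 hαn
    rw [hV, cnt_zipWith]
    have hcongr : (a.zip y).countP (fun p => (if p.1 ≤ α then M * (p.1 - 1) + p.2
          else M * (p.1 - 1) + p.2 - (p.1 - 1 - α) - (if e < p.2 then 1 else 0))
            ≤ M * (α - 1) + e)
        = (a.zip y).countP (fun p => p.1 ≤ α - 1 || (p.1 = α && p.2 ≤ e)) := by
      apply List.countP_congr
      intro p hp
      obtain ⟨hp1, hp2⟩ := List.of_mem_zip hp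
      simp only [decide_eq_true_eq, Bool.or_eq_true, Bool.and_eq_true]
      constructor
      · intro hval
        rcases Nat.lt_or_ge α p.1 with hc | hc
        · exfalso
          have hVB := VB p hp α hα1 hc
          rw [if_neg (by omega)] at hval
          omega
        · rw [if_pos hc] at hval
          rcases Nat.lt_or_ge p.1 α with hc2 | hc2
          · left; omega
          · have hxa : p.1 = α := by omega
            right
            rw [hxa] at hval
            exact ⟨hxa, by omega⟩
      · intro hval
        rcases hval with hsm | ⟨hxa, hwe⟩
        · rw [if_pos (by omega)]
          have := VS2 p hp (α - 1) (by omega)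
          omega
        · rw [if_pos (by omega), hxa]
          omega
    rw [hcongr, countP_or_eq]
    · congr 1
      rw [cnt_eq_countP]
      exact countP_zip_fst a y hlen (fun x => x ≤ α - 1)
    · intro p _ hpq
      simp only [Bool.and_eq_true, decide_eq_true_eq] at hpq
      omega
  -- eα bound
  have healpha : ∀ α, (a.zip y).countP (fun p => p.1 = α && p.2 ≤ e) ≤ e - 1 := by
    intro α
    have h1 : (a.zip y).countP (fun p => p.1 = α && p.2 ≤ e)
        ≤ (a.zip y).countP (fun p => p.2 ≤ e) := by
      apply List.countP_mono_left
      intro p _ hp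
      simp only [Bool.and_eq_true] at hp
      exact hp.2
    have h2 : (a.zip y).countP (fun p => p.2 ≤ e) = cnt y e := by
      rw [cnt_eq_countP]
      exact countP_zip_snd a y hlen (fun w => w ≤ e)
    omega
  -- the gap removal step at block α
  have hstep : ∀ α, 1 ≤ α → α ≤ n → pk (V α) = pk (V (α - 1)) := by
    intro α hα1 hαn
    set l := M * (α - 1) + e with hldef
    set eα := (a.zip y).countP (fun p => p.1 = α && p.2 ≤ e) with heα
    have hclα : cnt (V α) l = cnt a (α - 1) + eα := hcl α hα1 hαn
    have heα1 := healpha α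
    have hCa : cnt a (α - 1) ≤ n := by
      have := cnt_le_length a (α - 1); omega
    have hMα : α = 1 ∨ M ≤ M * (α - 1) := by
      rcases Nat.eq_or_lt_of_le hα1 with h | h
      · left; omega
      · right
        calc M = M * 1 := by omega
        _ ≤ M * (α - 1) := Nat.mul_le_mul_left M (by omega)
    have hCa0 : α = 1 → cnt a (α - 1) = 0 := by
      intro h; rw [h]
      exact cnt_zero_of_pos a (fun x hx => (ha1 x hx).1)
    have hcntlt : cnt a (α - 1) + eα + 1 ≤ l := by
      rcases hMα with h1 | h1
      · have := hCa0 h1; rw [hldef]; omega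
      · rw [hldef]; omega
    -- h4 : deficiency bounds below l
    have h4 : ∀ s, s < l → s - cnt (V α) s < l - cnt (V α) l := by
      intro s hsl
      rw [hclα]
      rcases Nat.eq_zero_or_pos s with rfl | hs1
      · omega
      rcases Nat.lt_or_ge (M * (α - 1)) s with hmid | hlow
      · -- s = M(α-1) + r with 1 ≤ r ≤ e-1
        set r := s - M * (α - 1) with hrdef
        have hr1 : 1 ≤ r ∧ r + 1 ≤ e := by rw [hldef] at hsl; omega
        set f := (a.zip y).countP (fun p => p.1 = α && p.2 ≤ r) with hf
        have hge : cnt a (α - 1) + f ≤ cnt (V α) s := by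
          have hsum : (a.zip y).countP (fun p => p.1 ≤ α - 1 || (p.1 = α && p.2 ≤ r))
              = (a.zip y).countP (fun p => p.1 ≤ α - 1) + f := by
            apply countP_or_eq
            intro p _ hpq
            simp only [Bool.and_eq_true, decide_eq_true_eq] at hpq
            omega
          have hmono : (a.zip y).countP (fun p => p.1 ≤ α - 1 || (p.1 = α && p.2 ≤ r))
              ≤ cnt (V α) s := by
            rw [hV, cnt_zipWith]
            apply List.countP_mono_left
            intro p hp hpred
            simp only [Bool.or_eq_true, Bool.and_eq_true, decide_eq_true_eq] at hpred ⊢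
            rcases hpred with hsm | ⟨hxa, hwr⟩
            · rw [if_pos (by omega)]
              have := VS2 p hp (α - 1) (by omega)
              omega
            · rw [if_pos (by omega), hxa]
              omega
          have hfst : (a.zip y).countP (fun p => p.1 ≤ α - 1)
              = cnt a (α - 1) := by
            rw [cnt_eq_countP]
            exact countP_zip_fst a y hlen (fun x => x ≤ α - 1)
          omega
        have hediff : eα ≤ f + (cnt y e - cnt y r) := by
          have h1 : (a.zip y).countP (fun p => p.1 = α && p.2 ≤ e)
              ≤ (a.zip y).countP (fun p => (p.1 = α && p.2 ≤ r) || (r < p.2 && p.2 ≤ e)) := by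
            apply List.countP_mono_left
            intro p _ hp
            simp only [Bool.or_eq_true, Bool.and_eq_true, decide_eq_true_eq] at hp ⊢
            omega
          have h2 := countP_or_le (a.zip y) (fun p => p.1 = α && p.2 ≤ r)
            (fun p => r < p.2 && p.2 ≤ e)
          have h3 : (a.zip y).countP (fun p => r < p.2 && p.2 ≤ e)
              = cnt y e - cnt y r := by
            have h4 : (a.zip y).countP (fun p => r < p.2 && p.2 ≤ e)
                = y.countP (fun w => r < w && w ≤ e) := by
              exact countP_zip_snd a y hlen (fun w => r < w && w ≤ e)
            have h5 := cnt_split y (show r ≤ e by omega)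
            omega
          omega
        have hyr := hymin r (by omega)
        have hcye : cnt y e ≤ e - 1 := by omega
        rw [hldef]
        omega
      · -- 1 ≤ s ≤ M(α-1) : s in a lower block
        obtain ⟨q, r0, hqr, hr0⟩ : ∃ q r0, s - 1 = M * q + r0 ∧ r0 < M :=
          ⟨(s - 1) / M, (s - 1) % M, (Nat.div_add_mod (s - 1) M).symm,
            Nat.mod_lt _ (by omega)⟩
        set r := r0 + 1 with hrdef
        set β := q + 1 with hβdef
        have hsdec : s = M * q + r := by omega
        have hβα : β ≤ α - 1 := by
          by_contra hcc
          have : α - 1 ≤ q := by omega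
          have : M * (α - 1) ≤ M * q := Nat.mul_le_mul_left M this
          omega
        set f := (a.zip y).countP (fun p => p.1 = β && p.2 ≤ r) with hf
        have hge : cnt a (β - 1) + f ≤ cnt (V α) s := by
          have hsum : (a.zip y).countP (fun p => p.1 ≤ β - 1 || (p.1 = β && p.2 ≤ r))
              = (a.zip y).countP (fun p => p.1 ≤ β - 1) + f := by
            apply countP_or_eq
            intro p _ hpq
            simp only [Bool.and_eq_true, decide_eq_true_eq] at hpq
            omega
          have hmono : (a.zip y).countP (fun p => p.1 ≤ β - 1 || (p.1 = β && p.2 ≤ r))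
              ≤ cnt (V α) s := by
            rw [hV, cnt_zipWith]
            apply List.countP_mono_left
            intro p hp hpred
            simp only [Bool.or_eq_true, Bool.and_eq_true, decide_eq_true_eq] at hpred ⊢
            rcases hpred with hsm | ⟨hxa, hwr⟩
            · rw [if_pos (by omega)]
              have := VS2 p hp (β - 1) (by omega)
              have hq2 : M * (β - 1) ≤ M * q := Nat.mul_le_mul_left M (by omega)
              omega
            · rw [if_pos (by omega), hxa]
              have hq2 : M * (β - 1) ≤ M * q := Nat.mul_le_mul_left M (by omega)
              omega
          have hfst : (a.zip y).countP (fun p => p.1 ≤ β - 1)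
              = cnt a (β - 1) := by
            rw [cnt_eq_countP]
            exact countP_zip_fst a y hlen (fun x => x ≤ β - 1)
          omega
        -- f ≥ count(x = β) - count(w > r)
        have hxβ : (a.zip y).countP (fun p => p.1 = β)
            = cnt a β - cnt a (β - 1) := by
          have h1 : (a.zip y).countP (fun p => p.1 = β) = a.countP (fun x => x = β) := by
            exact countP_zip_fst a y hlen (fun x => x = β)
          have h2 := cnt_split a (show β - 1 ≤ β by omega)
          have h3 : a.countP (fun x => β - 1 < x && x ≤ β) = a.countP (fun x => x = β) := by
            apply List.countP_congr
            intro x _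
            simp only [Bool.and_eq_true, decide_eq_true_eq]
            omega
          omega
        have hfsplit : (a.zip y).countP (fun p => p.1 = β)
            ≤ f + (n - cnt y r) := by
          have h1 : (a.zip y).countP (fun p => p.1 = β)
              ≤ (a.zip y).countP (fun p => (p.1 = β && p.2 ≤ r) || r < p.2) := by
            apply List.countP_mono_left
            intro p _ hp
            simp only [Bool.or_eq_true, Bool.and_eq_true, decide_eq_true_eq] at hp ⊢
            omega
          have h2 := countP_or_le (a.zip y) (fun p => p.1 = β && p.2 ≤ r)
            (fun p => r < p.2)
          have h3 : (a.zip y).countP (fun p => r < p.2) = n - cnt y r := by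
            have h4 : (a.zip y).countP (fun p => r < p.2) = y.countP (fun w => r < w) :=
              countP_zip_snd a y hlen (fun w => r < w)
            rw [h4, countP_gt, hylen]
          omega
        have hAr := hA r
        have hcmono : cnt a β ≤ cnt a (α - 1) := cnt_mono a (by omega)
        have E1 : M * β = M * q + M := by
          rw [hβdef, Nat.mul_add]; omega
        rw [hldef]
        rcases Nat.eq_or_lt_of_le hβα with hββ | hββ
        · have hceq : cnt a β = cnt a (α - 1) := by rw [hββ]
          have E3 : M * β = M * (α - 1) := by rw [hββ]
          omega
        · have E3 : M * (β + 1) ≤ M * (α - 1) := Nat.mul_le_mul_left M (by omega)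
          have E4 : M * (β + 1) = M * β + M := by rw [Nat.mul_add]; omega
          omega
    -- the mapped word
    have hmap : (V α).map (fun v => if l < v then v - 1 else v) = V (α - 1) := by
      rw [hV]
      simp only
      rw [List.map_zipWith]
      apply zipWith_congr_mem
      intro p hp
      obtain ⟨hp1, hp2⟩ := List.of_mem_zip hp
      have hx1 := (ha1 p.1 hp1).1
      have hw1 := hy1 p.2 hp2
      have hwe := hyne p.2 hp2
      rcases Nat.lt_or_ge α p.1 with hc | hc
      · -- upper blocks : strictly above l, shift down
        have hVB := VB p hp α hα1 hc
        rw [if_neg (show ¬ p.1 ≤ α by omega), if_neg (show ¬ p.1 ≤ α - 1 by omega)]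
        have hVB' : l < M * (p.1 - 1) + p.2 - (p.1 - 1 - α) - (if e < p.2 then 1 else 0) := by
          rw [hldef]; exact hVB
        rw [if_pos hVB']
        rw [hldef] at hVB'
        omega
      · rcases Nat.eq_or_lt_of_le hc with hxa | hxlt
        · -- x = α
          rw [if_pos (show p.1 ≤ α by omega), if_neg (show ¬ p.1 ≤ α - 1 by omega), ← hxa]
          by_cases hew : e < p.2
          · rw [if_pos (show l < M * (p.1 - 1) + p.2 by rw [hldef, hxa]; omega),
              if_pos hew]
            omega
          · rw [if_neg (show ¬ l < M * (p.1 - 1) + p.2 by rw [hldef, hxa]; omega),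
              if_neg hew]
            omega
        · -- x ≤ α - 1
          have hVS := VS2 p hp (α - 1) (by omega)
          rw [if_pos (show p.1 ≤ α by omega), if_pos (show p.1 ≤ α - 1 by omega),
            if_neg (show ¬ l < M * (p.1 - 1) + p.2 by rw [hldef]; omega)]
    rw [← hmap]
    apply gap1
    · rw [hclα]; omega
    · intro x hx
      obtain ⟨p, hp, rfl⟩ := mem_zipWith' hx
      obtain ⟨hp1, hp2⟩ := List.of_mem_zip hp
      have hx1 := (ha1 p.1 hp1).1
      have hwe := hyne p.2 hp2
      rcases Nat.lt_or_ge α p.1 with hc | hc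
      · have hVB := VB p hp α hα1 hc
        rw [if_neg (show ¬ p.1 ≤ α by omega), hldef]
        omega
      · rcases Nat.eq_or_lt_of_le hc with hxa | hxlt
        · rw [if_pos (show p.1 ≤ α by omega), hldef]
          rw [← hxa]
          omega
        · rw [if_pos (show p.1 ≤ α by omega), hldef]
          have := VS2 p hp (α - 1) (by omega)
          omega
    · exact h4
  -- chain down from α = n to 0
  have hchain : ∀ j, j ≤ n → pk (V n) = pk (V (n - j)) := by
    intro j
    induction j with
    | zero => intro _; rfl
    | succ m ih =>
      intro hm
      rw [ih (by omega)]
      have h1 : (1 : ℕ) ≤ n - m := by omega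
      have h2 : n - m ≤ n := by omega
      have := hstep (n - m) h1 h2
      rw [this]
      congr 1
  -- endpoints
  have hVn : V n = List.zipWith (fun x w => M * (x - 1) + w) a y := by
    rw [hV]
    apply zipWith_congr_mem
    intro p hp
    obtain ⟨hp1, _⟩ := List.of_mem_zip hp
    rw [if_pos (ha1 p.1 hp1).2]
  have hV0 : V 0 = List.zipWith
      (fun x w => (M - 1) * (x - 1) + (if e < w then w - 1 else w)) a y := by
    rw [hV]
    apply zipWith_congr_mem
    intro p hp
    obtain ⟨hp1, hp2⟩ := List.of_mem_zip hp
    have hx1 := (ha1 p.1 hp1).1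
    have hw1 := hy1 p.2 hp2
    rw [if_neg (by omega)]
    have E : M * (p.1 - 1) = (M - 1) * (p.1 - 1) + (p.1 - 1) := by
      have : (M - 1) + 1 = M := by omega
      calc M * (p.1 - 1) = ((M - 1) + 1) * (p.1 - 1) := by rw [this]
      _ = (M - 1) * (p.1 - 1) + (p.1 - 1) := by rw [Nat.add_mul]; omega
    by_cases hew : e < p.2
    · rw [if_pos hew, if_pos hew]
      omega
    · rw [if_neg hew, if_neg hew]
      omega
  rw [← hVn, ← hV0]
  have := hchain n le_rfl
  simpa using this

/- ## chains -/

lemma cnt_step_lt (y : List ℕ) (d r : ℕ) (hyne : ∀ x ∈ y, x ≠ d) (hr : r < d) :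
    cnt (y.map fun w => if d < w then w - 1 else w) r = cnt y r := by
  rw [cnt_eq_countP, List.countP_map, cnt_eq_countP]
  apply List.countP_congr
  intro x hx
  have := hyne x hx
  simp only [Function.comp]
  by_cases h : d < x <;> simp [h] <;> omega

lemma cnt_step_ge (y : List ℕ) (d r : ℕ) (hyne : ∀ x ∈ y, x ≠ d) (hr : d ≤ r) :
    cnt (y.map fun w => if d < w then w - 1 else w) r = cnt y (r + 1) := by
  rw [cnt_eq_countP, List.countP_map, cnt_eq_countP]
  apply List.countP_congr
  intro x hx
  have := hyne x hx
  simp only [Function.comp]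
  by_cases h : d < x <;> simp [h] <;> omega

lemma lchain (n : ℕ) (hn : 1 ≤ n) (c : List ℕ) (hclen : c.length = n)
    (hc1 : ∀ x ∈ c, 1 ≤ x ∧ x ≤ n) (hcP : ∀ r, 1 ≤ r → r ≤ n → r ≤ cnt c r) :
    ∀ N z, z.sum ≤ N → z.length = n → (∀ x ∈ z, 1 ≤ x) →
    pk (List.zipWith (fun x y => n * (x - 1) + y) (park z) c)
      = pk (List.zipWith (fun x y => n * (x - 1) + y) z c) := by
  intro N
  induction N with
  | zero =>
    intro z hsum hzlen hz1
    exfalso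
    cases z with
    | nil => simp at hzlen; omega
    | cons a t => have := hz1 a (by simp); simp at hsum; omega
  | succ N ih =>
    intro z hsum hzlen hz1
    by_cases h : dpark z = z.length + 1
    · rw [park_fixed z h]
    · have hdlen : dpark z ≤ z.length := by have := dpark_le z; omega
      set z' := z.map fun x => if dpark z < x then x - 1 else x with hz'
      have hz'1 : ∀ x ∈ z', 1 ≤ x := step_letters_pos z hz1 _ (dpark_pos z)
      have hz'len : z'.length = n := by rw [hz', List.length_map, hzlen]
      have hz'sum : z'.sum ≤ N := by
        have hex : ∃ x ∈ z, dpark z < x := by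
          apply exists_letter_gt
          have := dpark_spec z; omega
        have hsl := sum_step_lt z (dpark z) hex
        rw [← hz'] at hsl
        omega
      have hps : park z = park z' := park_step z hz1 h
      have hls := lstep n (dpark z) hn z c hzlen hclen hz1 hc1 hcP (dpark_pos z)
        (by have := dpark_spec z; omega) (fun s hs => dpark_min z hs)
      calc pk (List.zipWith (fun x y => n * (x - 1) + y) (park z) c)
          = pk (List.zipWith (fun x y => n * (x - 1) + y) (park z') c) := by rw [hps]
        _ = pk (List.zipWith (fun x y => n * (x - 1) + y) z' c) := ih z' hz'sum hz'len hz'1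
        _ = pk (List.zipWith (fun x y => n * (x - 1) + y) z c) := hls.symm

lemma rchain (n : ℕ) (hn : 1 ≤ n) (a : List ℕ) (halen : a.length = n)
    (ha1 : ∀ x ∈ a, 1 ≤ x ∧ x ≤ n) :
    ∀ M y, y.length = n → (∀ x ∈ y, 1 ≤ x) → (∀ r, n - cnt y r ≤ M - r) →
    pk (List.zipWith (fun x w => M * (x - 1) + w) a y)
      = pk (List.zipWith (fun x w => n * (x - 1) + w) a (park y)) := by
  intro M
  induction M using Nat.strong_induction_on with
  | _ M ih =>
  intro y hylen hy1 hA
  have hc0 := cnt_zero_of_pos y hy1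
  have hnM : n ≤ M := by have := hA 0; omega
  by_cases h : dpark y = y.length + 1
  · -- y is already a parking function
    rw [park_fixed y h]
    rcases Nat.eq_or_lt_of_le hnM with hMn | hMn
    · rw [hMn]
    · have hyle : ∀ x ∈ y, x ≤ n := by
        have := letters_le_length y h
        intro x hx; have := this x hx; omega
      have hcnn : cnt y (n + 1) ≤ n := by
        have := cnt_le_length y (n + 1); omega
      have hstep := rstep n M (n + 1) a y hn halen hylen ha1 hy1 hA hnM (by omega)
        (by omega) (by omega)
        (fun s hs => dpark_min y (by omega))
        (fun x hx => by have := hyle x hx; omega)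
      rw [hstep]
      have hcongr : List.zipWith
          (fun x w => (M - 1) * (x - 1) + (if n + 1 < w then w - 1 else w)) a y
          = List.zipWith (fun x w => (M - 1) * (x - 1) + w) a y := by
        apply zipWith_congr_mem
        intro p hp
        obtain ⟨_, hp2⟩ := List.of_mem_zip hp
        have := hyle p.2 hp2
        rw [if_neg (by omega)]
      rw [hcongr]
      have hA' : ∀ r, n - cnt y r ≤ (M - 1) - r := by
        intro r
        rcases Nat.lt_or_ge r (n + 1) with hr | hr
        · have := dpark_min y (show r < dpark y by omega)
          omega
        · have h1 : cnt y n = n := by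
            have h2 := dpark_min y (show n < dpark y by omega)
            have h3 := cnt_le_length y n
            omega
          have := cnt_mono y (show n ≤ r by omega)
          omega
      have := ih (M - 1) (by omega) y hylen hy1 hA'
      rw [this, park_fixed y h]
  · -- d-step
    have hdlen : dpark y ≤ n := by have := dpark_le y; omega
    have hdpos := dpark_pos y
    have hspec := dpark_spec y
    have hyne := dpark_no_letter y h
    have hMn1 : n + 1 ≤ M := by
      have h1 := hA (dpark y)
      omega
    have hstep := rstep n M (dpark y) a y hn halen hylen ha1 hy1 hA hnM (by omega) hdpos
      (by omega) (fun s hs => dpark_min y hs) hyne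
    rw [hstep]
    set y' := y.map fun w => if dpark y < w then w - 1 else w with hy'
    have hconv : List.zipWith
        (fun x w => (M - 1) * (x - 1) + (if dpark y < w then w - 1 else w)) a y
        = List.zipWith (fun x w => (M - 1) * (x - 1) + w) a y' := by
      rw [hy', List.zipWith_map_right]
    rw [hconv]
    have hy'1 : ∀ x ∈ y', 1 ≤ x := step_letters_pos y hy1 _ hdpos
    have hy'len : y'.length = n := by rw [hy', List.length_map, hylen]
    have hA' : ∀ r, n - cnt y' r ≤ (M - 1) - r := by
      intro r
      rcases Nat.lt_or_ge r (dpark y) with hr | hr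
      · rw [hy', cnt_step_lt y _ r hyne hr]
        have := dpark_min y hr
        omega
      · rw [hy', cnt_step_ge y _ r hyne hr]
        have := hA (r + 1)
        omega
    have := ih (M - 1) (by omega) y' hy'len hy'1 hA'
    rw [this, ← park_step y hy1 h]

/- ## initial invariant and the triple identity -/

lemma initA (n : ℕ) (hn : 1 ≤ n) (b c : List ℕ) (hblen : b.length = n) (hclen : c.length = n)
    (hb1 : ∀ x ∈ b, 1 ≤ x ∧ x ≤ n) (hbP : ∀ s, 1 ≤ s → s ≤ n → s ≤ cnt b s)
    (hc1 : ∀ x ∈ c, 1 ≤ x ∧ x ≤ n) (hcP : ∀ s, 1 ≤ s → s ≤ n → s ≤ cnt c s) :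
    ∀ r, n - cnt (List.zipWith (fun x y => n * (x - 1) + y) b c) r ≤ n * n - r := by
  intro r
  have hlen : b.length = c.length := by omega
  set y := List.zipWith (fun x y => n * (x - 1) + y) b c with hy
  have hylen : y.length = n := by
    rw [hy, List.length_zipWith, hblen, hclen, min_self]
  have hvle : ∀ p ∈ b.zip c, n * (p.1 - 1) + p.2 ≤ n * n := by
    intro p hp
    obtain ⟨hp1, hp2⟩ := List.of_mem_zip hp
    have h1 := hb1 p.1 hp1
    have h2 := hc1 p.2 hp2
    have E1 : n * (p.1 - 1) + n = n * p.1 := mul_pred_add n p.1 h1.1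
    have E2 : n * p.1 ≤ n * n := Nat.mul_le_mul_left n h1.2
    omega
  rcases Nat.eq_zero_or_pos r with rfl | hr1
  · have : n ≤ n * n := Nat.le_mul_of_pos_left n hn
    have := cnt_le_length y 0
    omega
  rcases Nat.lt_or_ge (n * n) r with hbig | hsmall
  · have : cnt y r = n := by
      rw [← hylen]
      rw [cnt_eq_length_iff]
      intro v hv
      obtain ⟨p, hp, rfl⟩ := mem_zipWith' hv
      have := hvle p hp
      omega
    omega
  · obtain ⟨q, r0, hqr, hr0⟩ : ∃ q r0, r - 1 = n * q + r0 ∧ r0 < n :=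
      ⟨(r - 1) / n, (r - 1) % n, (Nat.div_add_mod (r - 1) n).symm,
        Nat.mod_lt _ (by omega)⟩
    set u := q + 1 with hu
    set ρ := r0 + 1 with hρ
    have hrdec : r = n * q + ρ := by omega
    have hun : u ≤ n := by
      by_contra hc2
      have h2 : n ≤ q := by omega
      have : n * n ≤ n * q := Nat.mul_le_mul_left n h2
      omega
    have hcount : y.countP (fun v => r < v) = n - cnt y r := by
      rw [countP_gt, hylen]
    have hsplit : y.countP (fun v => r < v)
        ≤ (n - cnt b u) + (n - cnt c ρ) := by
      have h1 : y.countP (fun v => r < v)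
          = (b.zip c).countP (fun p => r < n * (p.1 - 1) + p.2) := by
        rw [hy, zipWith_eq_map_zip, List.countP_map]
        rfl
      have h2 : (b.zip c).countP (fun p => r < n * (p.1 - 1) + p.2)
          ≤ (b.zip c).countP (fun p => u < p.1 || ρ < p.2) := by
        apply List.countP_mono_left
        intro p hp hval
        simp only [decide_eq_true_eq, Bool.or_eq_true] at hval ⊢
        by_contra hcc
        push_neg at hcc
        have hmul : n * (p.1 - 1) ≤ n * (u - 1) := Nat.mul_le_mul_left n (by omega)
        have Fq2 : n * (u - 1) = n * q := by congr 1 <;> omega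
        omega
      have h3 := countP_or_le (b.zip c) (fun p => u < p.1) (fun p => ρ < p.2)
      have h4 : (b.zip c).countP (fun p => u < p.1) = n - cnt b u := by
        have := countP_zip_fst b c hlen (fun x => u < x)
        rw [this, countP_gt, hblen]
      have h5 : (b.zip c).countP (fun p => ρ < p.2) = n - cnt c ρ := by
        have := countP_zip_snd b c hlen (fun x => ρ < x)
        rw [this, countP_gt, hclen]
      omega
    have hbu := hbP u (by omega) hun
    have hcρ := hcP ρ (by omega) (by omega)
    have F1 : n * (u - 1) + n = n * u := mul_pred_add n u (by omega)
    have Fq : n * (u - 1) = n * q := by congr 1 <;> omega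
    have F4 : n * n = n * u + n * (n - u) := by
      rw [← Nat.mul_add]; congr 1; omega
    have F3 : (n - u) ≤ n * (n - u) := Nat.le_mul_of_pos_left _ hn
    omega

lemma triple_enc (n : ℕ) (a b c : List ℕ) (hb1 : ∀ x ∈ b, 1 ≤ x) :
    List.zipWith (fun x w => (n * n) * (x - 1) + w) a
        (List.zipWith (fun v w => n * (v - 1) + w) b c)
      = List.zipWith (fun x w => n * (x - 1) + w)
        (List.zipWith (fun x v => n * (x - 1) + v) a b) c := by
  induction a generalizing b c with
  | nil => simp
  | cons x ta ih =>
    cases b with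
    | nil => simp
    | cons v tb =>
      cases c with
      | nil => simp
      | cons w tc =>
        have hv : 1 ≤ v := hb1 v (by simp)
        simp only [List.zipWith_cons_cons, List.cons.injEq]
        constructor
        · have h1 : n * (x - 1) + v - 1 = n * (x - 1) + (v - 1) := by omega
          rw [h1, Nat.mul_add, ← Nat.mul_assoc]
          omega
        · exact ih tb tc (fun z hz => hb1 z (by simp [hz]))

/- ## basic facts about park and parking functions -/

lemma parkAux_length : ∀ (fuel : ℕ) (w : List ℕ), (parkAux fuel w).length = w.length := by
  intro fuel
  induction fuel with
  | zero => intro w; rfl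
  | succ f ih =>
    intro w
    rw [parkAux]
    split
    · rfl
    · rw [ih, List.length_map]

lemma park_length (w : List ℕ) : (park w).length = w.length := parkAux_length _ w

lemma pf_letters_le (w : List ℕ) (hw : IsParkingFunction w) : ∀ x ∈ w, x ≤ w.length := by
  cases hlen : w.length with
  | zero =>
    intro x hx
    rw [List.length_eq_zero_iff] at hlen
    subst hlen; simp at hx
  | succ m =>
    have h1 := hw.2 w.length (by omega) le_rfl
    have h2 : cnt w w.length = w.length := by
      have := cnt_le_length w w.length
      have h3 : w.length ≤ cnt w w.length := h1
      omega
    intro x hx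
    have := (cnt_eq_length_iff w w.length).1 h2 x hx
    omega


/-- For each fixed `n ≥ 1`, the internal product maps pairs of parking functions of
length `n` to parking functions of length `n`, and it is associative on `PF_n`. -/
theorem internal_product_associative (n : ℕ) (hn : 1 ≤ n) :
    (∀ a b : List ℕ, a.length = n → b.length = n →
      IsParkingFunction a → IsParkingFunction b →
      (iprod n a b).length = n ∧ IsParkingFunction (iprod n a b)) ∧
    (∀ a b c : List ℕ, a.length = n → b.length = n → c.length = n →
      IsParkingFunction a → IsParkingFunction b → IsParkingFunction c →
      iprod n (iprod n a b) c = iprod n a (iprod n b c)) := by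
  constructor
  · intro a b ha hb hPa hPb
    have hzlen : (List.zipWith (fun x y => n * (x - 1) + y) a b).length = n := by
      rw [List.length_zipWith, ha, hb, min_self]
    have hz1 : ∀ x ∈ List.zipWith (fun x y => n * (x - 1) + y) a b, 1 ≤ x := by
      intro x hx
      obtain ⟨p, hp, rfl⟩ := mem_zipWith' hx
      have := hPb.1 p.2 (List.of_mem_zip hp).2
      omega
    constructor
    · rw [iprod, park_eq_pk _ hz1, pk_length, hzlen]
    · rw [iprod, park_eq_pk _ hz1]
      exact pk_isPF _ hz1
  · intro a b c ha hb hc hPa hPb hPc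
    have ha1' : ∀ x ∈ a, 1 ≤ x ∧ x ≤ n := fun x hx =>
      ⟨hPa.1 x hx, by have := pf_letters_le a hPa x hx; omega⟩
    have hb1' : ∀ x ∈ b, 1 ≤ x ∧ x ≤ n := fun x hx =>
      ⟨hPb.1 x hx, by have := pf_letters_le b hPb x hx; omega⟩
    have hc1' : ∀ x ∈ c, 1 ≤ x ∧ x ≤ n := fun x hx =>
      ⟨hPc.1 x hx, by have := pf_letters_le c hPc x hx; omega⟩
    have hbP : ∀ s, 1 ≤ s → s ≤ n → s ≤ cnt b s := fun s h1 h2 =>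
      hPb.2 s h1 (by omega)
    have hcP : ∀ s, 1 ≤ s → s ≤ n → s ≤ cnt c s := fun s h1 h2 =>
      hPc.2 s h1 (by omega)
    set z := List.zipWith (fun x y => n * (x - 1) + y) a b with hz
    set y := List.zipWith (fun x y => n * (x - 1) + y) b c with hy
    have hzlen : z.length = n := by rw [hz, List.length_zipWith, ha, hb, min_self]
    have hylen : y.length = n := by rw [hy, List.length_zipWith, hb, hc, min_self]
    have hz1 : ∀ x ∈ z, 1 ≤ x := by
      intro x hx
      obtain ⟨p, hp, rfl⟩ := mem_zipWith' hx
      have := (hb1' p.2 (List.of_mem_zip hp).2).1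
      omega
    have hy1 : ∀ x ∈ y, 1 ≤ x := by
      intro x hx
      obtain ⟨p, hp, rfl⟩ := mem_zipWith' hx
      have := (hc1' p.2 (List.of_mem_zip hp).2).1
      omega
    have hpz1 : ∀ x ∈ park z, 1 ≤ x := by
      rw [park_eq_pk z hz1]; exact pk_pos z hz1
    have hpy1 : ∀ x ∈ park y, 1 ≤ x := by
      rw [park_eq_pk y hy1]; exact pk_pos y hy1
    have hL1 : ∀ x ∈ List.zipWith (fun x y => n * (x - 1) + y) (park z) c, 1 ≤ x := by
      intro x hx
      obtain ⟨p, hp, rfl⟩ := mem_zipWith' hx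
      have := (hc1' p.2 (List.of_mem_zip hp).2).1
      omega
    have hR1 : ∀ x ∈ List.zipWith (fun x y => n * (x - 1) + y) a (park y), 1 ≤ x := by
      intro x hx
      obtain ⟨p, hp, rfl⟩ := mem_zipWith' hx
      have := hpy1 p.2 (List.of_mem_zip hp).2
      omega
    show park (List.zipWith (fun x y => n * (x - 1) + y) (park z) c)
      = park (List.zipWith (fun x y => n * (x - 1) + y) a (park y))
    rw [park_eq_pk _ hL1, park_eq_pk _ hR1]
    have hLchain := lchain n hn c hc hc1' hcP z.sum z le_rfl hzlen hz1
    have hRchain := rchain n hn a ha ha1' (n * n) y hylen hy1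
      (initA n hn b c hb hc hb1' hbP hc1' hcP)
    rw [hLchain, ← hRchain, triple_enc n a b c (fun x hx => (hb1' x hx).1)]
end

section
/- Let π' and π'' be nondecreasing parking functions of lengths p and q respectively. Then the set of all rearrangements of the shifted concatenation π'•π'' is the disjoint union, over all pairs (a, b) where a is a rearrangement of π' and b is a rearrangement of π'', of the shifted shuffles a⋒b; moreover every such rearrangement w arises from exactly one pair (a, b) and occurs with multiplicity one in a⋒b (a is the subword of letters ≤ p of w and b[p] is the subword of letters > p). Equivalently, in PQSym the elements P^π := Σ_{a a rearrangement of π} F_a satisfy P^{π'} P^{π''} = P^{π'•π''}. -/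
/-- `IsShuffle u v w` means that `w` is a shuffle (interleaving) of `u` and `v`. -/
inductive IsShuffle : List ℕ → List ℕ → List ℕ → Prop
  | nil : IsShuffle [] [] []
  | left {a : ℕ} {u v w : List ℕ} : IsShuffle u v w → IsShuffle (a :: u) v (a :: w)
  | right {b : ℕ} {u v w : List ℕ} : IsShuffle u v w → IsShuffle u (b :: v) (b :: w)

/-- The list of all shuffles (interleavings) of two words, with multiplicities. -/
def shuffles : List ℕ → List ℕ → List (List ℕ)
  | [], v => [v]
  | a :: u, [] => [a :: u]
  | a :: u, b :: v =>
      ((shuffles u (b :: v)).map (a :: ·)) ++ ((shuffles (a :: u) v).map (b :: ·))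
  termination_by u v => u.length + v.length

lemma IsShuffle.perm {u v w : List ℕ} (h : IsShuffle u v w) : w.Perm (u ++ v) := by
  induction h with
  | nil => simp
  | @left a _ _ _ _ ih => exact ih.cons a
  | right _ ih => exact (ih.cons _).trans List.perm_middle.symm

lemma IsShuffle.filter_left (P : ℕ → Bool) {u v w : List ℕ}
    (h : IsShuffle u v w) (hu : ∀ x ∈ u, P x = true) (hv : ∀ x ∈ v, P x = false) :
    u = w.filter P := by
  induction h with
  | nil => rfl
  | @left a u v w _ ih =>
    rw [List.filter_cons_of_pos (hu a (by simp))]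
    rw [← ih (fun x hx => hu x (by simp [hx])) hv]
  | @right b u v w _ ih =>
    rw [List.filter_cons_of_neg (by simp [hv b (by simp)])]
    exact ih hu (fun x hx => hv x (by simp [hx]))

lemma IsShuffle.filter_right (Q : ℕ → Bool) {u v w : List ℕ}
    (h : IsShuffle u v w) (hu : ∀ x ∈ u, Q x = false) (hv : ∀ x ∈ v, Q x = true) :
    v = w.filter Q := by
  induction h with
  | nil => rfl
  | @left a u v w _ ih =>
    rw [List.filter_cons_of_neg (by simp [hu a (by simp)])]
    exact ih (fun x hx => hu x (by simp [hx])) hv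
  | @right b u v w _ ih =>
    rw [List.filter_cons_of_pos (hv b (by simp))]
    rw [← ih hu (fun x hx => hv x (by simp [hx]))]

lemma isShuffle_filter (P : ℕ → Bool) (w : List ℕ) :
    IsShuffle (w.filter P) (w.filter (fun x => !P x)) w := by
  induction w with
  | nil => exact IsShuffle.nil
  | cons a w ih =>
    by_cases h : P a = true
    · rw [List.filter_cons_of_pos h, List.filter_cons_of_neg (by simp [h])]
      exact IsShuffle.left ih
    · rw [List.filter_cons_of_neg h, List.filter_cons_of_pos (by simp_all)]
      exact IsShuffle.right ih

lemma count_cons_map (a : ℕ) (w : List ℕ) : ∀ L : List (List ℕ),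
    (L.map (a :: ·)).count (a :: w) = L.count w
  | [] => rfl
  | l :: L => by simp [List.count_cons, count_cons_map a w L]

lemma count_shuffles_eq_one (P : ℕ → Bool) {u v w : List ℕ}
    (h : IsShuffle u v w) (hu : ∀ x ∈ u, P x = true) (hv : ∀ x ∈ v, P x = false) :
    (shuffles u v).count w = 1 := by
  induction h with
  | nil => simp [shuffles]
  | @left a u v w h ih =>
    cases v with
    | nil =>
      have : u = w := by simpa using h.filter_left (fun _ => true) (by simp) (by simp)
      subst this; simp [shuffles]
    | cons b v' =>
      have hab : a ≠ b := by
        have h1 := hu a (by simp); have h2 := hv b (by simp)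
        intro e; rw [e, h2] at h1; cases h1
      rw [show shuffles (a::u) (b::v') =
        ((shuffles u (b::v')).map (a :: ·)) ++ ((shuffles (a::u) v').map (b :: ·)) from by
          rw [shuffles]]
      rw [List.count_append]
      have e1 : ((shuffles u (b::v')).map (a :: ·)).count (a :: w) =
          (shuffles u (b::v')).count w := count_cons_map a w _
      have e2 : ((shuffles (a::u) v').map (b :: ·)).count (a :: w) = 0 := by
        apply List.count_eq_zero.mpr
        intro hmem
        obtain ⟨x, -, hx⟩ := List.mem_map.mp hmem
        exact hab ((List.cons.injEq _ _ _ _).mp hx).1.symm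
      rw [e1, e2, ih (fun x hx => hu x (by simp [hx])) hv]
  | @right b u v w h ih =>
    cases u with
    | nil =>
      have : v = w := by simpa using h.filter_right (fun _ => true) (by simp) (by simp)
      subst this; simp [shuffles]
    | cons a u' =>
      have hab : a ≠ b := by
        have h1 := hu a (by simp); have h2 := hv b (by simp)
        intro e; rw [e, h2] at h1; cases h1
      rw [show shuffles (a::u') (b::v) =
        ((shuffles u' (b::v)).map (a :: ·)) ++ ((shuffles (a::u') v).map (b :: ·)) from by
          rw [shuffles]]
      rw [List.count_append]
      have e1 : ((shuffles u' (b::v)).map (a :: ·)).count (b :: w) = 0 := by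
        apply List.count_eq_zero.mpr
        intro hmem
        obtain ⟨x, -, hx⟩ := List.mem_map.mp hmem
        exact hab ((List.cons.injEq _ _ _ _).mp hx).1
      have e2 : ((shuffles (a::u') v).map (b :: ·)).count (b :: w) =
          (shuffles (a::u') v).count w := count_cons_map b w _
      rw [e1, e2, ih hu (fun x hx => hv x (by simp [hx]))]

lemma IsParkingFunction.le_length {w : List ℕ} (h : IsParkingFunction w) :
    ∀ x ∈ w, x ≤ w.length := by
  intro x hx
  by_contra hlt
  push_neg at hlt
  set n := w.length with hn
  have hn1 : 1 ≤ n := List.length_pos_iff.mpr (List.ne_nil_of_mem hx)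
  have h2 := h.2 n hn1 le_rfl
  have hsub : List.Sublist (w.filter (fun y => y ≤ n)) w := List.filter_sublist
  have heq : w.filter (fun y => y ≤ n) = w := hsub.eq_of_length_le (by omega)
  have := List.of_mem_filter (p := fun y => decide (y ≤ n)) (heq ▸ hx)
  simp at this
  omega

/-- Let `π'` and `π''` be nondecreasing parking functions of lengths `p` and `q`.
A word `w` is a rearrangement of the shifted concatenation `π' • π''` if and only if
it lies in the shifted shuffle `a ⋒ b` for some rearrangement `a` of `π'` and some
rearrangement `b` of `π''`; moreover such a pair `(a, b)` is unique — `a` is the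
subword of letters `≤ p` of `w` and the shift `b[p]` is the subword of letters `> p` —
and `w` occurs with multiplicity one in `a ⋒ b`. (Equivalently, in `PQSym` the sums
`P^π = Σ_{a ~ π} F_a` satisfy `P^{π'} P^{π''} = P^{π' • π''}`.) -/
theorem rearrangements_of_shifted_concatenation (p q : ℕ) (pi' pi'' : List ℕ)
    (h1 : pi'.length = p) (h2 : pi''.length = q)
    (hpf1 : IsParkingFunction pi') (hpf2 : IsParkingFunction pi'')
    (hs1 : List.Pairwise (· ≤ ·) pi') (hs2 : List.Pairwise (· ≤ ·) pi'') :
    ∀ w : List ℕ,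
      (w.Perm (pi' ++ pi''.map (· + p)) ↔
        ∃ a b : List ℕ, a.Perm pi' ∧ b.Perm pi'' ∧ IsShuffle a (b.map (· + p)) w) ∧
      (∀ a b : List ℕ, a.Perm pi' → b.Perm pi'' → IsShuffle a (b.map (· + p)) w →
        a = w.filter (fun x => x ≤ p) ∧
        b = (w.filter (fun x => p < x)).map (· - p) ∧
        (shuffles a (b.map (· + p))).count w = 1) := by

  -- letters of pi' are ≤ p; letters of pi'' are ≥ 1
  have hle : ∀ x ∈ pi', x ≤ p := fun x hx => h1 ▸ hpf1.le_length x hx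
  have hge : ∀ x ∈ pi'', 1 ≤ x := hpf2.1
  have hA : pi'.filter (fun x => x ≤ p) = pi' :=
    List.filter_eq_self.mpr (fun x hx => by simpa using hle x hx)
  have hB : (pi''.map (· + p)).filter (fun x => x ≤ p) = [] := by
    apply List.filter_eq_nil_iff.mpr
    intro x hx
    obtain ⟨y, hy, rfl⟩ := List.mem_map.mp hx
    have := hge y hy
    simp; omega
  have hA' : pi'.filter (fun x => p < x) = [] := by
    apply List.filter_eq_nil_iff.mpr
    intro x hx
    have := hle x hx
    simp; omega
  have hB' : (pi''.map (· + p)).filter (fun x => p < x) = pi''.map (· + p) := by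
    apply List.filter_eq_self.mpr
    intro x hx
    obtain ⟨y, hy, rfl⟩ := List.mem_map.mp hx
    have := hge y hy
    simp; omega
  intro w
  constructor
  · constructor
    · -- forward: take filters
      intro hperm
      refine ⟨w.filter (fun x => x ≤ p), (w.filter (fun x => p < x)).map (· - p), ?_, ?_, ?_⟩
      · exact (hperm.filter _).trans (by rw [List.filter_append, hA, hB, List.append_nil])
      · have hbb : (w.filter (fun x => p < x)).Perm (pi''.map (· + p)) :=
          (hperm.filter _).trans (by rw [List.filter_append, hA', hB', List.nil_append])
        have hid : ((pi''.map (· + p)).map (· - p)) = pi'' := by simp [Function.comp_def]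
        exact hid ▸ hbb.map (· - p)
      · have hmap : ((w.filter (fun x => p < x)).map (· - p)).map (· + p)
            = w.filter (fun x => p < x) := by
          have hpx : ∀ x ∈ w.filter (fun x => p < x), x - p + p = x := by
            intro x hx
            have := List.of_mem_filter hx
            simp at this
            omega
          rw [List.map_map, Function.comp_def]
          rw [List.map_congr_left (g := id) (by simpa using hpx)]
          simp
        rw [hmap]
        have := isShuffle_filter (fun x => decide (x ≤ p)) w
        have hfc : w.filter (fun x => !decide (x ≤ p)) = w.filter (fun x => p < x) := by
          apply List.filter_congr
          intro x _
          by_cases h : x ≤ p <;> simp [h] <;> omega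
        rwa [hfc] at this
    · -- backward
      rintro ⟨a, b, ha, hb, hsh⟩
      exact hsh.perm.trans (ha.append (hb.map _))
  · -- uniqueness
    intro a b ha hb hsh
    have hu : ∀ x ∈ a, decide (x ≤ p) = true := fun x hx => by
      simpa using hle x (ha.mem_iff.mp hx)
    have hv : ∀ x ∈ b.map (· + p), decide (x ≤ p) = false := by
      intro x hx
      obtain ⟨y, hy, rfl⟩ := List.mem_map.mp hx
      have := hge y (hb.mem_iff.mp hy)
      simp; omega
    have hu' : ∀ x ∈ a, decide (p < x) = false := fun x hx => by
      simpa using Nat.not_lt.mpr (hle x (ha.mem_iff.mp hx))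
    have hv' : ∀ x ∈ b.map (· + p), decide (p < x) = true := by
      intro x hx
      obtain ⟨y, hy, rfl⟩ := List.mem_map.mp hx
      have := hge y (hb.mem_iff.mp hy)
      simp; omega
    refine ⟨hsh.filter_left _ hu hv, ?_, count_shuffles_eq_one _ hsh hu hv⟩
    have e := hsh.filter_right (fun x => decide (p < x)) hu' hv'
    have hbid : (b.map (· + p)).map (· - p) = b := by simp [Function.comp_def]
    rw [← e, hbid]
end

section
/- For n ≥ 2, the number of segmented nondecreasing parking functions of length n that have a bar at every breakpoint (i.e. pairs (π, B) with π a nondecreasing parking function of length n, B a subset of the strict-ascent positions {i ∈ {1,…,n−1} : π_i < π_{i+1}}, such that every b ∈ {1,…,n−1} which is a breakpoint of π belongs to B) equals twice the number of segmented nondecreasing parking functions of length n−1 (pairs (π', B') with π' a nondecreasing parking function of length n−1 and B' any subset of its strict-ascent positions). Consequently these objects are counted by the large Schröder numbers. -/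
/-- `b` is a breakpoint of the word `w` if exactly `b` letters of `w` are `≤ b`. -/
def IsBreakpoint (w : List ℕ) (b : ℕ) : Prop :=
  (w.filter (fun x => x ≤ b)).length = b

/-- A parking function is prime if its only breakpoints are the trivial ones,
`0` and its length. -/
def IsPrimeParkingFunction (w : List ℕ) : Prop :=
  IsParkingFunction w ∧ ∀ b, IsBreakpoint w b → b = 0 ∨ b = w.length

/-- A segmented nondecreasing parking function of length `n` is a pair `(π, B)` of a
nondecreasing parking function `π` of length `n` together with a set `B` of bars,
placed at (1-indexed) strict-ascent positions `i ∈ {1,…,n-1}` with `π_i < π_{i+1}`. -/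
def IsSegmentedNDPF (n : ℕ) (π : List ℕ) (B : Finset ℕ) : Prop :=
  π.length = n ∧ IsParkingFunction π ∧ List.Pairwise (· ≤ ·) π ∧
  ∀ i ∈ B, 1 ≤ i ∧ i ≤ n - 1 ∧ π.getD (i - 1) 0 < π.getD i 0

namespace SegPF

/-- number of letters of `w` that are `≤ b` -/
def cnt (w : List ℕ) (b : ℕ) : ℕ := (w.filter (fun x => x ≤ b)).length

/-- insert the letter `c+1` at (0-indexed) position `c` -/
def ins (c : ℕ) (σ : List ℕ) : List ℕ := σ.take c ++ (c + 1) :: σ.drop c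

/-- delete the letter at (0-indexed) position `c` -/
def del (c : ℕ) (π : List ℕ) : List ℕ := π.take c ++ π.drop (c + 1)

def barIns (c : ℕ) (C : Finset ℕ) : Finset ℕ :=
  C.filter (fun i => i < c) ∪ (if 1 ≤ c then {c} else ∅) ∪
    (C.filter (fun i => c ≤ i)).image (· + 1)

def barDel (c : ℕ) (B : Finset ℕ) : Finset ℕ :=
  B.filter (fun i => i < c) ∪ (B.filter (fun i => c + 1 < i)).image (· - 1)

/-- the largest breakpoint of `π` (in `[0, len)`) -/
def cP (π : List ℕ) : ℕ :=
  ((Finset.range π.length).filter (fun b => cnt π b = b)).sup id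

/-- the largest `b ∈ [1, len]` with `cnt σ b = b`, `b ∉ C`, and all smaller
breakpoints in `C` -/
def cC (σ : List ℕ) (C : Finset ℕ) : ℕ :=
  ((Finset.Icc 1 σ.length).filter
    (fun b => cnt σ b = b ∧ b ∉ C ∧ ∀ j < b, ¬ (1 ≤ j ∧ cnt σ j = j ∧ j ∉ C))).sup id

lemma cnt_mono {w : List ℕ} {a b : ℕ} (h : a ≤ b) : cnt w a ≤ cnt w b :=
  List.Sublist.length_le <| List.monotone_filter_right w
    (fun x hx => by simp only [decide_eq_true_eq] at *; omega)

lemma cnt_le_length (w : List ℕ) (b : ℕ) : cnt w b ≤ w.length :=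
  List.length_filter_le _ _

lemma cnt_zero {w : List ℕ} (h : ∀ x ∈ w, 1 ≤ x) : cnt w 0 = 0 := by
  unfold cnt
  rw [List.filter_eq_nil_iff.mpr]
  · rfl
  · intro a ha
    have := h a ha
    simp only [decide_eq_true_eq]
    omega

lemma cnt_split (w : List ℕ) (i v : ℕ) :
    cnt w v = cnt (w.take i) v + cnt (w.drop i) v := by
  unfold cnt
  rw [← List.length_append, ← List.filter_append, List.take_append_drop]

lemma length_ins {c : ℕ} {σ : List ℕ} (h : c ≤ σ.length) :
    (ins c σ).length = σ.length + 1 := by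
  unfold ins
  simp [List.length_append, List.length_take, List.length_drop]
  omega

lemma cnt_ins (c v : ℕ) (σ : List ℕ) :
    cnt (ins c σ) v = cnt σ v + if c + 1 ≤ v then 1 else 0 := by
  unfold ins
  rw [cnt_split σ c]
  unfold cnt
  rw [List.filter_append, List.filter_cons]
  split <;> (rename_i hh; simp only [decide_eq_true_eq] at hh)
  · simp only [List.length_append, List.length_cons]
    rw [if_pos hh]; omega
  · simp only [List.length_append]
    rw [if_neg hh]; omega

lemma del_ins {c : ℕ} {σ : List ℕ} (h : c ≤ σ.length) : del c (ins c σ) = σ := by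
  unfold del ins
  have h1 : (σ.take c).length = c := by simp [List.length_take]; omega
  rw [List.take_left' h1]
  have h2 : ((σ.take c) ++ [c+1]).length = c + 1 := by simp [h1]
  rw [show σ.take c ++ (c+1) :: σ.drop c = (σ.take c ++ [c+1]) ++ σ.drop c by simp]
  rw [List.drop_left' h2, List.take_append_drop]

lemma ins_del {c : ℕ} {π : List ℕ} (hc : c < π.length) (hv : π.getD c 0 = c + 1) :
    ins c (del c π) = π := by
  unfold ins del
  have h1 : (π.take c).length = c := by simp [List.length_take]; omega
  rw [List.take_left' h1, List.drop_left' h1]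
  rw [List.getD_eq_getElem _ _ hc] at hv
  conv_rhs => rw [← List.take_append_drop c π, List.drop_eq_getElem_cons hc, hv]

lemma ins_getD_lt {c j : ℕ} {σ : List ℕ} (h : c ≤ σ.length) (hj : j < c) :
    (ins c σ).getD j 0 = σ.getD j 0 := by
  have hj' : j < σ.length := lt_of_lt_of_le hj h
  have h1 : j < (σ.take c).length := by simp [List.length_take]; omega
  have h2 : j < (ins c σ).length := by rw [length_ins h]; omega
  rw [List.getD_eq_getElem _ _ h2, List.getD_eq_getElem _ _ hj']
  simp only [ins]
  rw [List.getElem_append_left h1, List.getElem_take]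

lemma ins_getD_self {c : ℕ} {σ : List ℕ} (h : c ≤ σ.length) :
    (ins c σ).getD c 0 = c + 1 := by
  have h2 : c < (ins c σ).length := by rw [length_ins h]; omega
  rw [List.getD_eq_getElem _ _ h2]
  simp only [ins]
  have h1 : (σ.take c).length ≤ c := by simp [List.length_take]
  rw [List.getElem_append_right h1]
  have hh : c - (σ.take c).length = 0 := by simp [List.length_take]; omega
  simp only [List.length_take, hh]
  simp [Nat.min_eq_left h]

lemma ins_getD_gt {c j : ℕ} {σ : List ℕ} (h : c ≤ σ.length) (hj : c < j) :
    (ins c σ).getD j 0 = σ.getD (j - 1) 0 := by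
  by_cases hj' : j - 1 < σ.length
  · have h2 : j < (ins c σ).length := by rw [length_ins h]; omega
    rw [List.getD_eq_getElem _ _ h2, List.getD_eq_getElem _ _ hj']
    simp only [ins]
    have h1 : (σ.take c).length ≤ j := by simp [List.length_take]; omega
    rw [List.getElem_append_right h1]
    have hlt : (σ.take c).length = c := by simp [List.length_take]; omega
    have hpos : 0 < j - (σ.take c).length := by omega
    have h3 : j - (σ.take c).length = (j - c - 1) + 1 := by omega
    simp only [h3, List.getElem_cons_succ]
    rw [List.getElem_drop]
    congr 1
    omega
  · rw [List.getD_eq_default σ _ (by omega), List.getD_eq_default (ins c σ) _ (by rw [length_ins h]; omega)]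

lemma sorted_getElem_le {w : List ℕ} (hs : List.Pairwise (· ≤ ·) w) {i j : ℕ}
    (hij : i ≤ j) (hj : j < w.length) : w[i]'(by omega) ≤ w[j] := by
  rcases eq_or_lt_of_le hij with rfl | hlt
  · exact le_refl _
  · exact List.pairwise_iff_getElem.mp hs i j (by omega) hj hlt

/-- For a sorted word, the entry at index `i` is `≤ v` iff at least `i+1` letters are `≤ v`. -/
lemma sorted_getElem_le_iff {w : List ℕ} (hs : List.Pairwise (· ≤ ·) w) {i : ℕ}
    (hi : i < w.length) (v : ℕ) : w[i] ≤ v ↔ i + 1 ≤ cnt w v := by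
  constructor
  · intro h
    have hall : ∀ x ∈ w.take (i+1), decide (x ≤ v) = true := by
      intro x hx
      rw [List.mem_iff_getElem] at hx
      obtain ⟨j, hjl, rfl⟩ := hx
      have hjlen : j < w.length := by
        have := List.length_take (i := i+1) (l := w)
        omega
      rw [List.getElem_take]
      simp only [decide_eq_true_eq]
      have hji : j ≤ i := by
        have := List.length_take (i := i+1) (l := w)
        omega
      exact le_trans (sorted_getElem_le hs hji hi) h
    have htake : cnt (w.take (i+1)) v = i + 1 := by
      unfold cnt
      rw [List.filter_eq_self.mpr hall, List.length_take]
      omega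
    have hsplit := cnt_split w (i+1) v
    omega
  · intro h
    by_contra hlt
    push_neg at hlt
    have hdrop : cnt (w.drop i) v = 0 := by
      unfold cnt
      rw [List.filter_eq_nil_iff.mpr, List.length_nil]
      intro x hx
      rw [List.mem_iff_getElem] at hx
      obtain ⟨j, hjl, rfl⟩ := hx
      rw [List.getElem_drop]
      simp only [decide_eq_true_eq]
      have hjlen : i + j < w.length := by
        have := List.length_drop (i := i) (l := w)
        omega
      have := sorted_getElem_le hs (Nat.le_add_right i j) hjlen
      omega
    have htake : cnt (w.take i) v ≤ i :=
      le_trans (cnt_le_length _ _) (by rw [List.length_take]; omega)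
    have hsplit := cnt_split w i v
    omega

lemma sorted_getD_le_iff {w : List ℕ} (hs : List.Pairwise (· ≤ ·) w) {i : ℕ}
    (hi : i < w.length) (v : ℕ) : w.getD i 0 ≤ v ↔ i + 1 ≤ cnt w v := by
  rw [List.getD_eq_getElem _ _ hi]
  exact sorted_getElem_le_iff hs hi v

lemma mem_take_le {σ : List ℕ} {c x : ℕ} (hs : List.Pairwise (· ≤ ·) σ)
    (hcnt : cnt σ c = c) (hx : x ∈ σ.take c) : x ≤ c := by
  rw [List.mem_iff_getElem] at hx
  obtain ⟨j, hjl, rfl⟩ := hx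
  have hjlen : j < σ.length := by
    have := List.length_take (i := c) (l := σ); omega
  have hjc : j < c := by
    have := List.length_take (i := c) (l := σ); omega
  rw [List.getElem_take]
  rw [sorted_getElem_le_iff hs hjlen c]
  omega

lemma mem_drop_gt {σ : List ℕ} {c x : ℕ} (hs : List.Pairwise (· ≤ ·) σ)
    (hcnt : cnt σ c = c) (hx : x ∈ σ.drop c) : c < x := by
  rw [List.mem_iff_getElem] at hx
  obtain ⟨j, hjl, rfl⟩ := hx
  have hjlen : c + j < σ.length := by
    have := List.length_drop (i := c) (l := σ); omega
  rw [List.getElem_drop]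
  by_contra hle
  push_neg at hle
  rw [sorted_getElem_le_iff hs hjlen c] at hle
  omega

lemma sorted_ins {σ : List ℕ} {c : ℕ} (hs : List.Pairwise (· ≤ ·) σ)
    (hcnt : cnt σ c = c) : List.Pairwise (· ≤ ·) (ins c σ) := by
  unfold ins
  rw [List.pairwise_append]
  refine ⟨hs.sublist (List.take_sublist c σ), ?_, ?_⟩
  · rw [List.pairwise_cons]
    exact ⟨fun x hx => mem_drop_gt hs hcnt hx,
      hs.sublist (List.drop_sublist c σ)⟩
  · intro a ha b hb
    have ha' := mem_take_le hs hcnt ha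
    rcases List.mem_cons.mp hb with rfl | hb'
    · omega
    · have := mem_drop_gt hs hcnt hb'
      omega

lemma pf_ins {σ : List ℕ} {c : ℕ} (hpf : IsParkingFunction σ)
    (hc : c ≤ σ.length) (hcnt : cnt σ c = c) : IsParkingFunction (ins c σ) := by
  obtain ⟨h1, h2⟩ := hpf
  constructor
  · intro x hx
    unfold ins at hx
    rcases List.mem_append.mp hx with hx' | hx'
    · exact h1 x (List.mem_of_mem_take hx')
    · rcases List.mem_cons.mp hx' with rfl | hx''
      · omega
      · exact h1 x (List.mem_of_mem_drop hx'')
  · intro i hi1 hi2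
    rw [length_ins hc] at hi2
    show i ≤ cnt (ins c σ) i
    rw [cnt_ins]
    by_cases hic : c + 1 ≤ i
    · rw [if_pos hic]
      by_cases hil : i ≤ σ.length
      · have hh : i ≤ cnt σ i := h2 i hi1 hil
        omega
      · have hi' : i = σ.length + 1 := by omega
        by_cases h0 : σ.length = 0
        · omega
        · have ha : σ.length ≤ cnt σ σ.length := h2 σ.length (by omega) (le_refl _)
          have hb := cnt_mono (w := σ) (show σ.length ≤ i by omega)
          omega
    · rw [if_neg hic]
      have hh : i ≤ cnt σ i := h2 i hi1 (by omega)
      omega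

lemma cnt_ins_eq_iff {σ : List ℕ} {c b : ℕ} (hpf : IsParkingFunction σ)
    (hb1 : 1 ≤ b) (hb2 : b ≤ σ.length) :
    cnt (ins c σ) b = b ↔ (b ≤ c ∧ cnt σ b = b) := by
  rw [cnt_ins]
  have hge : b ≤ cnt σ b := hpf.2 b hb1 hb2
  by_cases hcb : c + 1 ≤ b
  · rw [if_pos hcb]
    constructor
    · intro h; omega
    · intro h; omega
  · rw [if_neg hcb]
    constructor
    · intro h; exact ⟨by omega, by omega⟩
    · intro h; omega

lemma mem_barIns {c i : ℕ} {C : Finset ℕ} :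
    i ∈ barIns c C ↔ (i ∈ C ∧ i < c) ∨ (1 ≤ c ∧ i = c) ∨ (∃ j ∈ C, c ≤ j ∧ i = j + 1) := by
  unfold barIns
  have hmid : i ∈ (if 1 ≤ c then ({c} : Finset ℕ) else ∅) ↔ (1 ≤ c ∧ i = c) := by
    split_ifs with h <;> simp [h]
  rw [Finset.mem_union, Finset.mem_union, hmid, Finset.mem_filter, Finset.mem_image]
  constructor
  · rintro ((⟨h1, h2⟩ | h1) | ⟨j, hj, hj3⟩)
    · exact Or.inl ⟨h1, h2⟩
    · exact Or.inr (Or.inl h1)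
    · obtain ⟨hj1, hj2⟩ := Finset.mem_filter.mp hj
      exact Or.inr (Or.inr ⟨j, hj1, hj2, hj3.symm⟩)
  · rintro (⟨h1, h2⟩ | h1 | ⟨j, hj1, hj2, hj3⟩)
    · exact Or.inl (Or.inl ⟨h1, h2⟩)
    · exact Or.inl (Or.inr h1)
    · exact Or.inr ⟨j, Finset.mem_filter.mpr ⟨hj1, hj2⟩, hj3.symm⟩

lemma mem_barDel {c i : ℕ} {B : Finset ℕ} :
    i ∈ barDel c B ↔ (i ∈ B ∧ i < c) ∨ (∃ j ∈ B, c + 1 < j ∧ i = j - 1) := by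
  unfold barDel
  simp only [Finset.mem_union, Finset.mem_filter, Finset.mem_image]
  constructor
  · rintro (⟨h1, h2⟩ | ⟨j, ⟨hj1, hj2⟩, hj3⟩)
    · exact Or.inl ⟨h1, h2⟩
    · exact Or.inr ⟨j, hj1, hj2, hj3.symm⟩
  · rintro (⟨h1, h2⟩ | ⟨j, hj1, hj2, hj3⟩)
    · exact Or.inl ⟨h1, h2⟩
    · exact Or.inr ⟨j, ⟨hj1, hj2⟩, hj3.symm⟩

lemma barDel_barIns {c : ℕ} {C : Finset ℕ} (h : c ∉ C) :
    barDel c (barIns c C) = C := by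
  ext i
  rw [mem_barDel]
  constructor
  · rintro (⟨hi, hlt⟩ | ⟨j, hj, hgt, rfl⟩)
    · rcases mem_barIns.mp hi with ⟨h1, _⟩ | ⟨_, rfl⟩ | ⟨k, _, hk2, rfl⟩
      · exact h1
      · omega
      · omega
    · rcases mem_barIns.mp hj with ⟨_, h2⟩ | ⟨_, rfl⟩ | ⟨k, hk1, hk2, rfl⟩
      · omega
      · omega
      · simpa using hk1
  · intro hi
    by_cases hic : i < c
    · exact Or.inl ⟨mem_barIns.mpr (Or.inl ⟨hi, hic⟩), hic⟩
    · have hic' : c < i := by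
        rcases Nat.lt_or_ge c i with h' | h'
        · exact h'
        · have : i = c := by omega
          exact absurd (this ▸ hi) h
      refine Or.inr ⟨i + 1, mem_barIns.mpr (Or.inr (Or.inr ⟨i, hi, by omega, rfl⟩)), by omega, by omega⟩

lemma barIns_barDel {c : ℕ} {B : Finset ℕ} (hB1 : ∀ i ∈ B, 1 ≤ i)
    (hc1 : c + 1 ∉ B) (hcB : 1 ≤ c → c ∈ B) : barIns c (barDel c B) = B := by
  ext i
  rw [mem_barIns]
  constructor
  · rintro (⟨hi, hlt⟩ | ⟨hc, rfl⟩ | ⟨j, hj, hge, rfl⟩)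
    · rcases mem_barDel.mp hi with ⟨h1, _⟩ | ⟨k, _, hk2, rfl⟩
      · exact h1
      · omega
    · exact hcB hc
    · rcases mem_barDel.mp hj with ⟨_, h2⟩ | ⟨k, hk1, hk2, rfl⟩
      · omega
      · have : k - 1 + 1 = k := by omega
        rwa [this]
  · intro hi
    have hi1 := hB1 i hi
    have hne : i ≠ c + 1 := fun hh => hc1 (hh ▸ hi)
    rcases Nat.lt_trichotomy i c with h' | rfl | h'
    · exact Or.inl ⟨mem_barDel.mpr (Or.inl ⟨hi, h'⟩), h'⟩
    · exact Or.inr (Or.inl ⟨hi1, rfl⟩)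
    · have hgt : c + 1 < i := by omega
      exact Or.inr (Or.inr ⟨i - 1, mem_barDel.mpr (Or.inr ⟨i, hi, hgt, rfl⟩), by omega, by omega⟩)

lemma le_cP {π : List ℕ} {b : ℕ} (hb : b < π.length) (h : cnt π b = b) : b ≤ cP π := by
  have hm : b ∈ (Finset.range π.length).filter (fun b => cnt π b = b) :=
    Finset.mem_filter.mpr ⟨Finset.mem_range.mpr hb, h⟩
  exact Finset.le_sup (f := id) hm

lemma cP_spec {π : List ℕ} (h0 : cnt π 0 = 0) (hl : 0 < π.length) :
    cP π < π.length ∧ cnt π (cP π) = cP π := by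
  have hne : ((Finset.range π.length).filter (fun b => cnt π b = b)).Nonempty :=
    ⟨0, Finset.mem_filter.mpr ⟨Finset.mem_range.mpr hl, h0⟩⟩
  obtain ⟨b, hb, hsup⟩ := Finset.exists_mem_eq_sup _ hne id
  obtain ⟨hb1, hb2⟩ := Finset.mem_filter.mp hb
  have : cP π = b := hsup
  rw [this]
  exact ⟨Finset.mem_range.mp hb1, hb2⟩

lemma cC_spec {σ : List ℕ} {C : Finset ℕ} (hm : cnt σ σ.length = σ.length)
    (hmC : σ.length ∉ C) (h1 : 1 ≤ σ.length) :
    1 ≤ cC σ C ∧ cC σ C ≤ σ.length ∧ cnt σ (cC σ C) = cC σ C ∧ cC σ C ∉ C ∧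
      ∀ j, 1 ≤ j → j < cC σ C → cnt σ j = j → j ∈ C := by
  set S : Finset ℕ := (Finset.Icc 1 σ.length).filter (fun j => cnt σ j = j ∧ j ∉ C) with hS
  have hSne : S.Nonempty :=
    ⟨σ.length, Finset.mem_filter.mpr ⟨Finset.mem_Icc.mpr ⟨h1, le_refl _⟩, hm, hmC⟩⟩
  set b0 := S.min' hSne with hb0def
  have hb0 : b0 ∈ S := Finset.min'_mem _ _
  obtain ⟨hb0I, hb0c, hb0C⟩ : b0 ∈ Finset.Icc 1 σ.length ∧ cnt σ b0 = b0 ∧ b0 ∉ C := by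
    have := Finset.mem_filter.mp hb0
    exact ⟨this.1, this.2.1, this.2.2⟩
  have hb0Q : b0 ∈ (Finset.Icc 1 σ.length).filter
      (fun b => cnt σ b = b ∧ b ∉ C ∧ ∀ j < b, ¬ (1 ≤ j ∧ cnt σ j = j ∧ j ∉ C)) := by
    refine Finset.mem_filter.mpr ⟨hb0I, hb0c, hb0C, ?_⟩
    intro j hj hcon
    have hjS : j ∈ S := by
      refine Finset.mem_filter.mpr ⟨Finset.mem_Icc.mpr ⟨hcon.1, ?_⟩, hcon.2.1, hcon.2.2⟩
      have := Finset.mem_Icc.mp hb0I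
      omega
    have := Finset.min'_le S j hjS
    omega
  obtain ⟨b, hb, hsup⟩ := Finset.exists_mem_eq_sup _ ⟨b0, hb0Q⟩ id
  have hcCb : cC σ C = b := hsup
  rw [hcCb]
  obtain ⟨hbI, hbc, hbC, hball⟩ := Finset.mem_filter.mp hb
  rw [Finset.mem_Icc] at hbI
  refine ⟨hbI.1, hbI.2, hbc, hbC, ?_⟩
  intro j hj1 hj2 hj3
  by_contra hjC
  exact hball j hj2 ⟨hj1, hj3, hjC⟩

lemma cC_eq {σ : List ℕ} {C : Finset ℕ} {c : ℕ} (h1 : 1 ≤ c) (h2 : c ≤ σ.length)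
    (h3 : cnt σ c = c) (h4 : c ∉ C)
    (h5 : ∀ j, 1 ≤ j → j < c → cnt σ j = j → j ∈ C) : cC σ C = c := by
  apply le_antisymm
  · apply Finset.sup_le
    intro b hb
    obtain ⟨hbI, hbc, hbC, hball⟩ := Finset.mem_filter.mp hb
    show b ≤ c
    by_contra hbc'
    push_neg at hbc'
    exact hball c hbc' ⟨h1, h3, h4⟩
  · refine Finset.le_sup (f := id) (Finset.mem_filter.mpr
      ⟨Finset.mem_Icc.mpr ⟨h1, h2⟩, h3, h4, ?_⟩)
    intro j hj hcon
    exact hcon.2.2 (h5 j hcon.1 hj hcon.2.1)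

/-- Master lemma: inserting the letter `c+1` at position `c` produces an element
of the prime-like segmented set, with largest breakpoint `c`. -/
lemma main_ins {σ : List ℕ} {C : Finset ℕ} {c : ℕ}
    (hpf : IsParkingFunction σ) (hs : List.Pairwise (· ≤ ·) σ)
    (hbars : ∀ i ∈ C, 1 ≤ i ∧ i ≤ σ.length - 1 ∧ σ.getD (i - 1) 0 < σ.getD i 0)
    (hc : c ≤ σ.length) (hcnt : cnt σ c = c) (hcC : c ∉ C)
    (hbp : ∀ j, 1 ≤ j → j < c → cnt σ j = j → j ∈ C) :
    IsSegmentedNDPF (σ.length + 1) (ins c σ) (barIns c C) ∧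
    (∀ b, 1 ≤ b → b ≤ σ.length → IsBreakpoint (ins c σ) b → b ∈ barIns c C) ∧
    cP (ins c σ) = c := by
  have hlen := length_ins hc
  refine ⟨⟨hlen, pf_ins hpf hc hcnt, sorted_ins hs hcnt, ?_⟩, ?_, ?_⟩
  · -- bars are at ascents
    intro i hi
    rcases mem_barIns.mp hi with ⟨hiC, hic⟩ | ⟨hc1, hieq⟩ | ⟨j, hjC, hcj, rfl⟩
    · obtain ⟨h1, h2, h3⟩ := hbars i hiC
      refine ⟨h1, by omega, ?_⟩
      rw [ins_getD_lt hc (by omega), ins_getD_lt hc (by omega)]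
      exact h3
    · rw [hieq]
      refine ⟨hc1, by omega, ?_⟩
      rw [ins_getD_self hc]
      have hci : c - 1 < σ.length := by omega
      rw [ins_getD_lt hc (by omega)]
      have := (sorted_getD_le_iff hs hci c).mpr (by omega)
      omega
    · obtain ⟨h1, h2, h3⟩ := hbars j hjC
      have hcj' : c < j := by
        rcases Nat.lt_or_ge c j with h' | h'
        · exact h'
        · have : j = c := by omega
          exact absurd (this ▸ hjC) hcC
      refine ⟨by omega, by omega, ?_⟩
      have e1 : j + 1 - 1 = j := by omega
      rw [e1, ins_getD_gt hc hcj', ins_getD_gt hc (by omega)]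
      have e2 : j + 1 - 1 = j := by omega
      rw [e2]
      exact h3
  · -- every nontrivial breakpoint is barred
    intro b hb1 hb2 hbk
    have hbk' : cnt (ins c σ) b = b := hbk
    rw [cnt_ins_eq_iff hpf hb1 hb2] at hbk'
    obtain ⟨hbc, hbcnt⟩ := hbk'
    rcases eq_or_lt_of_le hbc with rfl | hlt
    · exact mem_barIns.mpr (Or.inr (Or.inl ⟨hb1, rfl⟩))
    · exact mem_barIns.mpr (Or.inl ⟨hbp b hb1 hlt hbcnt, hlt⟩)
  · -- the largest breakpoint of the result is c
    apply le_antisymm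
    · apply Finset.sup_le
      intro b hb
      obtain ⟨hb1, hb2⟩ := Finset.mem_filter.mp hb
      rw [Finset.mem_range, hlen] at hb1
      show b ≤ c
      by_cases hb0 : b = 0
      · omega
      · have := (cnt_ins_eq_iff hpf (by omega) (by omega)).mp hb2
        exact this.1
    · apply le_cP
      · omega
      · rw [cnt_ins, if_neg (by omega)]
        omega

lemma length_del {c : ℕ} {π : List ℕ} (h : c < π.length) :
    (del c π).length = π.length - 1 := by
  unfold del
  simp only [List.length_append, List.length_take, List.length_drop]
  omega

lemma del_sublist (c : ℕ) (π : List ℕ) : (del c π).Sublist π := by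
  unfold del
  conv_rhs => rw [← List.take_append_drop c π]
  apply List.Sublist.append_left
  rw [← List.drop_drop]
  exact List.drop_sublist 1 (List.drop c π)

/-- Master decomposition lemma: every prime-like segmented NDPF of length `n` arises
by inserting `c+1` at position `c`, where `c` is its largest breakpoint. -/
lemma main_del {n : ℕ} (hn : 2 ≤ n) {π : List ℕ} {B : Finset ℕ}
    (hseg : IsSegmentedNDPF n π B)
    (hbb : ∀ b : ℕ, 1 ≤ b → b ≤ n - 1 → IsBreakpoint π b → b ∈ B) :
    IsSegmentedNDPF (n - 1) (del (cP π) π) (barDel (cP π) B) ∧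
    cP π ≤ (del (cP π) π).length ∧
    cnt (del (cP π) π) (cP π) = cP π ∧
    (cP π) ∉ barDel (cP π) B ∧
    (∀ j, 1 ≤ j → j < cP π → cnt (del (cP π) π) j = j → j ∈ barDel (cP π) B) ∧
    ins (cP π) (del (cP π) π) = π ∧
    barIns (cP π) (barDel (cP π) B) = B := by
  obtain ⟨hlen, hpf, hsort, hbars⟩ := hseg
  have h0 : cnt π 0 = 0 := cnt_zero hpf.1
  obtain ⟨hclt, hccnt⟩ := cP_spec h0 (by omega)
  set c := cP π with hcdef
  have hmax : ∀ b, b < π.length → cnt π b = b → b ≤ c := fun b hb h => le_cP hb h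
  have hgetD : π.getD c 0 = c + 1 := by
    rw [List.getD_eq_getElem _ _ hclt]
    have hub : π[c] ≤ c + 1 := by
      rw [sorted_getElem_le_iff hsort hclt]
      exact hpf.2 (c + 1) (by omega) (by omega)
    have hlb : ¬ (π[c] ≤ c) := by
      rw [sorted_getElem_le_iff hsort hclt]
      omega
    omega
  have hins : ins c (del c π) = π := ins_del hclt hgetD
  set σ := del c π with hσdef
  have hσlen : σ.length = n - 1 := by rw [hσdef, length_del hclt, hlen]
  have hcσ : c ≤ σ.length := by omega
  have hcntrel : ∀ v, cnt π v = cnt σ v + if c + 1 ≤ v then 1 else 0 := by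
    intro v
    conv_lhs => rw [← hins]
    exact cnt_ins c v σ
  have hσsort : List.Pairwise (· ≤ ·) σ := hsort.sublist (del_sublist c π)
  have hσcnt : cnt σ c = c := by
    have := hcntrel c
    rw [if_neg (by omega)] at this
    omega
  have hσpf : IsParkingFunction σ := by
    constructor
    · exact fun x hx => hpf.1 x (List.Sublist.subset (del_sublist c π) hx)
    · intro i hi1 hi2
      show i ≤ cnt σ i
      have hcnti := hcntrel i
      by_cases hic : i ≤ c
      · rw [if_neg (by omega)] at hcnti
        have : i ≤ cnt π i := hpf.2 i hi1 (by omega)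
        omega
      · rw [if_pos (by omega)] at hcnti
        have h1 : i ≤ cnt π i := hpf.2 i hi1 (by omega)
        have h2 : cnt π i ≠ i := by
          intro hh
          have := hmax i (by omega) hh
          omega
        omega
  have hσbars : ∀ i ∈ barDel c B, 1 ≤ i ∧ i ≤ (n - 1) - 1 ∧ σ.getD (i - 1) 0 < σ.getD i 0 := by
    intro i hi
    rcases mem_barDel.mp hi with ⟨hiB, hic⟩ | ⟨j, hjB, hjc, rfl⟩
    · obtain ⟨h1, h2, h3⟩ := hbars i hiB
      refine ⟨h1, by omega, ?_⟩
      rw [← hins, ins_getD_lt hcσ (by omega), ins_getD_lt hcσ (by omega)] at h3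
      exact h3
    · obtain ⟨h1, h2, h3⟩ := hbars j hjB
      refine ⟨by omega, by omega, ?_⟩
      rw [← hins, ins_getD_gt hcσ (show c < j - 1 by omega),
        ins_getD_gt hcσ (show c < j by omega)] at h3
      exact h3
  have hcnotin : c ∉ barDel c B := by
    intro h
    rcases mem_barDel.mp h with ⟨_, hlt⟩ | ⟨j, _, hj, heq⟩ <;> omega
  have hbp : ∀ j, 1 ≤ j → j < c → cnt σ j = j → j ∈ barDel c B := by
    intro j hj1 hj2 hj3
    have := hcntrel j
    rw [if_neg (by omega)] at this
    have hπj : cnt π j = j := by omega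
    have hjB : j ∈ B := hbb j hj1 (by omega) hπj
    exact mem_barDel.mpr (Or.inl ⟨hjB, hj2⟩)
  have hc1B : c + 1 ∉ B := by
    intro h
    obtain ⟨h1, h2, h3⟩ := hbars (c + 1) h
    have e1 : c + 1 - 1 = c := by omega
    rw [e1, hgetD] at h3
    have hc1lt : c + 1 < π.length := by omega
    have hle : ¬ (π.getD (c + 1) 0 ≤ c + 1) := by omega
    rw [List.getD_eq_getElem _ _ hc1lt, sorted_getElem_le_iff hsort hc1lt] at hle
    have hge : c + 1 ≤ cnt π (c + 1) := hpf.2 (c + 1) (by omega) (by omega)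
    have heq : cnt π (c + 1) = c + 1 := by omega
    have := hmax (c + 1) (by omega) heq
    omega
  have hrec : barIns c (barDel c B) = B :=
    barIns_barDel (fun i hi => (hbars i hi).1) hc1B
      (fun h1 => hbb c h1 (by omega) hccnt)
  exact ⟨⟨hσlen, hσpf, hσsort, hσbars⟩, hcσ, hσcnt, hcnotin, hbp, hins, hrec⟩

lemma segY_finite (m : ℕ) :
    {pB : List ℕ × Finset ℕ | IsSegmentedNDPF m pB.1 pB.2}.Finite := by
  classical
  apply Set.Finite.subset (Set.finite_range
    (fun fs : (Fin m → Fin (m + 1)) × Finset (Fin m) =>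
      ((List.ofFn fun i => ((fs.1 i : ℕ))), fs.2.image Fin.val)))
  rintro ⟨π, B⟩ ⟨hlen, hpf, _, hbars⟩
  dsimp only at hlen hpf hbars
  have hent : ∀ x ∈ π, x < m + 1 := by
    intro x hx
    rcases Nat.eq_zero_or_pos m with rfl | hm
    · rw [List.length_eq_zero_iff] at hlen
      subst hlen
      simp at hx
    · have h1 : m ≤ cnt π m := hpf.2 m hm (le_of_eq hlen.symm)
      have h2 : cnt π m ≤ π.length := cnt_le_length π m
      have heq : (π.filter (fun x => x ≤ m)).length = π.length := by
        show cnt π m = π.length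
        omega
      have hfe := (List.filter_sublist (l := π) (p := fun x => decide (x ≤ m))).eq_of_length heq
      have hxf : x ∈ π.filter (fun x => x ≤ m) := by rw [hfe]; exact hx
      have := List.of_mem_filter hxf
      simp only [decide_eq_true_eq] at this
      omega
  have hbar : ∀ a ∈ B, a < m := by
    intro a ha
    obtain ⟨h1, h2, _⟩ := hbars a ha
    omega
  refine ⟨(⟨fun i => ⟨π.getD i 0, ?_⟩, B.attachFin hbar⟩ :
      (Fin m → Fin (m + 1)) × Finset (Fin m)), ?_⟩
  · have hi : (i : ℕ) < π.length := by rw [hlen]; exact i.isLt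
    rw [List.getD_eq_getElem _ _ hi]
    exact hent _ (List.getElem_mem hi)
  · dsimp only
    refine Prod.ext ?_ ?_
    · apply List.ext_getElem
      · simp [hlen]
      · intro j h1 h2
        rw [List.getElem_ofFn]
        dsimp only
        rw [List.getD_eq_getElem _ _ h2]
    · ext a
      simp only [Finset.mem_image]
      constructor
      · rintro ⟨x, hx, rfl⟩
        exact (Finset.mem_attachFin hbar).mp hx
      · intro ha
        exact ⟨⟨a, hbar a ha⟩, (Finset.mem_attachFin hbar).mpr ha, rfl⟩

end SegPF

/-- For `n ≥ 2`, the number of segmented nondecreasing parking functions of length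
`n` having a bar at every nontrivial breakpoint equals twice the number of segmented
nondecreasing parking functions of length `n - 1`; consequently these objects are
counted by the large Schröder numbers. -/
theorem segmented_prime_like_count (n : ℕ) (hn : 2 ≤ n) :
    Set.ncard {pB : List ℕ × Finset ℕ |
        IsSegmentedNDPF n pB.1 pB.2 ∧
        ∀ b : ℕ, 1 ≤ b → b ≤ n - 1 → IsBreakpoint pB.1 b → b ∈ pB.2} =
      2 * Set.ncard {pB : List ℕ × Finset ℕ | IsSegmentedNDPF (n - 1) pB.1 pB.2} := by
  classical
  set Y : Set (List ℕ × Finset ℕ) := {pB | IsSegmentedNDPF (n - 1) pB.1 pB.2} with hY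
  set X : Set (List ℕ × Finset ℕ) := {pB : List ℕ × Finset ℕ |
      IsSegmentedNDPF n pB.1 pB.2 ∧
      ∀ b : ℕ, 1 ≤ b → b ≤ n - 1 → IsBreakpoint pB.1 b → b ∈ pB.2} with hX
  -- basic facts about elements of Y
  have hYfacts : ∀ p : List ℕ × Finset ℕ, p ∈ Y →
      p.1.length = n - 1 ∧ SegPF.cnt p.1 0 = 0 ∧ 0 ∉ p.2 ∧
      SegPF.cnt p.1 p.1.length = p.1.length ∧ p.1.length ∉ p.2 := by
    rintro ⟨σ, C⟩ hp
    rw [hY, Set.mem_setOf_eq] at hp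
    dsimp only at hp ⊢
    obtain ⟨hlen, hpf, hsort, hbars⟩ := hp
    have h0 : SegPF.cnt σ 0 = 0 := SegPF.cnt_zero hpf.1
    have h0C : 0 ∉ C := fun h => by have := (hbars 0 h).1; omega
    have hm : SegPF.cnt σ σ.length = σ.length := by
      have h1 : σ.length ≤ SegPF.cnt σ σ.length := hpf.2 σ.length (by omega) (le_refl _)
      have h2 := SegPF.cnt_le_length σ σ.length
      omega
    have hmC : σ.length ∉ C := by
      intro h
      obtain ⟨ha, hb, _⟩ := hbars σ.length h
      omega
    exact ⟨hlen, h0, h0C, hm, hmC⟩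
  -- image lemma
  have himg : ∀ (c : ℕ) (p : List ℕ × Finset ℕ), p ∈ Y → c ≤ p.1.length →
      SegPF.cnt p.1 c = c → c ∉ p.2 →
      (∀ j, 1 ≤ j → j < c → SegPF.cnt p.1 j = j → j ∈ p.2) →
      ((SegPF.ins c p.1, SegPF.barIns c p.2) ∈ X ∧
        SegPF.cP (SegPF.ins c p.1) = c) := by
    rintro c ⟨σ, C⟩ hp hc hcnt hcC hbp
    have hlen := (hYfacts _ hp).1
    rw [hY, Set.mem_setOf_eq] at hp
    dsimp only at hp hc hcnt hcC hbp hlen ⊢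
    obtain ⟨hlen', hpf, hsort, hbars⟩ := hp
    have hbars' : ∀ i ∈ C, 1 ≤ i ∧ i ≤ σ.length - 1 ∧ σ.getD (i - 1) 0 < σ.getD i 0 := by
      intro i hi
      obtain ⟨h1, h2, h3⟩ := hbars i hi
      exact ⟨h1, by omega, h3⟩
    obtain ⟨hseg, hbk, hcP⟩ := SegPF.main_ins hpf hsort hbars' hc hcnt hcC hbp
    have e : σ.length + 1 = n := by omega
    refine ⟨?_, hcP⟩
    rw [hX, Set.mem_setOf_eq]
    constructor
    · exact e ▸ hseg
    · intro b hb1 hb2 hbk'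
      exact hbk b hb1 (by omega) hbk'
  -- facts about cC for elements of Y
  have hg1facts : ∀ p : List ℕ × Finset ℕ, p ∈ Y →
      1 ≤ SegPF.cC p.1 p.2 ∧ SegPF.cC p.1 p.2 ≤ p.1.length ∧
      SegPF.cnt p.1 (SegPF.cC p.1 p.2) = SegPF.cC p.1 p.2 ∧ SegPF.cC p.1 p.2 ∉ p.2 ∧
      ∀ j, 1 ≤ j → j < SegPF.cC p.1 p.2 → SegPF.cnt p.1 j = j → j ∈ p.2 := by
    intro p hp
    obtain ⟨hlen, h0, h0C, hm, hmC⟩ := hYfacts p hp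
    exact SegPF.cC_spec hm hmC (by omega)
  -- the two partial inverse maps
  have hg0mem : ∀ p : List ℕ × Finset ℕ, p ∈ Y →
      ((SegPF.ins 0 p.1, SegPF.barIns 0 p.2) ∈ X ∧
        SegPF.cP (SegPF.ins 0 p.1) = 0) := by
    intro p hp
    obtain ⟨hlen, h0, h0C, hm, hmC⟩ := hYfacts p hp
    exact himg 0 p hp (by omega) h0 h0C (by omega)
  have hg1mem : ∀ p : List ℕ × Finset ℕ, p ∈ Y →
      ((SegPF.ins (SegPF.cC p.1 p.2) p.1, SegPF.barIns (SegPF.cC p.1 p.2) p.2) ∈ X ∧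
        SegPF.cP (SegPF.ins (SegPF.cC p.1 p.2) p.1) = SegPF.cC p.1 p.2) := by
    intro p hp
    obtain ⟨h1, h2, h3, h4, h5⟩ := hg1facts p hp
    exact himg _ p hp h2 h3 h4 h5
  set g0 : List ℕ × Finset ℕ → List ℕ × Finset ℕ :=
    fun p => (SegPF.ins 0 p.1, SegPF.barIns 0 p.2) with hg0
  set g1 : List ℕ × Finset ℕ → List ℕ × Finset ℕ :=
    fun p => (SegPF.ins (SegPF.cC p.1 p.2) p.1, SegPF.barIns (SegPF.cC p.1 p.2) p.2) with hg1
  have hXeq : X = g0 '' Y ∪ g1 '' Y := by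
    apply Set.Subset.antisymm
    · rintro ⟨π, B⟩ hx
      rw [hX, Set.mem_setOf_eq] at hx
      obtain ⟨hseg, hbb⟩ := hx
      obtain ⟨hseg', hcle, hccnt, hcnot, hbp, hins, hbar⟩ := SegPF.main_del hn hseg hbb
      have hYmem : (SegPF.del (SegPF.cP π) π, SegPF.barDel (SegPF.cP π) B) ∈ Y := by
        rw [hY, Set.mem_setOf_eq]
        exact hseg'
      by_cases hc0 : SegPF.cP π = 0
      · left
        refine ⟨(SegPF.del (SegPF.cP π) π, SegPF.barDel (SegPF.cP π) B), hYmem, ?_⟩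
        show (SegPF.ins 0 _, SegPF.barIns 0 _) = (π, B)
        rw [← hc0]
        exact Prod.ext hins hbar
      · right
        refine ⟨(SegPF.del (SegPF.cP π) π, SegPF.barDel (SegPF.cP π) B), hYmem, ?_⟩
        have hcCeq : SegPF.cC (SegPF.del (SegPF.cP π) π) (SegPF.barDel (SegPF.cP π) B) =
            SegPF.cP π := SegPF.cC_eq (by omega) hcle hccnt hcnot hbp
        show (SegPF.ins (SegPF.cC _ _) _, SegPF.barIns (SegPF.cC _ _) _) = (π, B)
        rw [hcCeq]
        exact Prod.ext hins hbar
    · rintro q (⟨p, hp, rfl⟩ | ⟨p, hp, rfl⟩)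
      · exact (hg0mem p hp).1
      · exact (hg1mem p hp).1
  have hYfin : Y.Finite := by
    rw [hY]
    exact SegPF.segY_finite (n - 1)
  have hdisj : Disjoint (g0 '' Y) (g1 '' Y) := by
    rw [Set.disjoint_left]
    rintro q ⟨p, hp, rfl⟩ ⟨p', hp', heq⟩
    have h1 := (hg0mem p hp).2
    have h2 := (hg1mem p' hp').2
    have h3 := (hg1facts p' hp').1
    have heq2 : SegPF.cP (g0 p).1 = SegPF.cP (g1 p').1 := by rw [heq]
    simp only [hg0, hg1] at heq2
    omega
  have hinj0 : Set.InjOn g0 Y := by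
    intro p hp q hq heq
    have h1 : SegPF.ins 0 p.1 = SegPF.ins 0 q.1 := congrArg Prod.fst heq
    have h2 : SegPF.barIns 0 p.2 = SegPF.barIns 0 q.2 := congrArg Prod.snd heq
    have hp0 := (hYfacts p hp).2.2.1
    have hq0 := (hYfacts q hq).2.2.1
    have e1 : p.1 = q.1 := by
      have := congrArg (SegPF.del 0) h1
      rwa [SegPF.del_ins (by omega), SegPF.del_ins (by omega)] at this
    have e2 : p.2 = q.2 := by
      have := congrArg (SegPF.barDel 0) h2
      rwa [SegPF.barDel_barIns hp0, SegPF.barDel_barIns hq0] at this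
    exact Prod.ext e1 e2
  have hinj1 : Set.InjOn g1 Y := by
    intro p hp q hq heq
    obtain ⟨hp1, hp2, hp3, hp4, hp5⟩ := hg1facts p hp
    obtain ⟨hq1, hq2, hq3, hq4, hq5⟩ := hg1facts q hq
    have hcc : SegPF.cC p.1 p.2 = SegPF.cC q.1 q.2 := by
      have h1 := (hg1mem p hp).2
      have h2 := (hg1mem q hq).2
      have heq2 : SegPF.cP (g1 p).1 = SegPF.cP (g1 q).1 := by rw [heq]
      simp only [hg1] at heq2
      omega
    have h1 : SegPF.ins (SegPF.cC p.1 p.2) p.1 = SegPF.ins (SegPF.cC q.1 q.2) q.1 :=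
      congrArg Prod.fst heq
    have h2 : SegPF.barIns (SegPF.cC p.1 p.2) p.2 = SegPF.barIns (SegPF.cC q.1 q.2) q.2 :=
      congrArg Prod.snd heq
    have e1 : p.1 = q.1 := by
      have := congrArg (SegPF.del (SegPF.cC p.1 p.2)) h1
      rw [SegPF.del_ins hp2, hcc] at this
      rwa [SegPF.del_ins hq2] at this
    have e2 : p.2 = q.2 := by
      have := congrArg (SegPF.barDel (SegPF.cC p.1 p.2)) h2
      rw [SegPF.barDel_barIns hp4, hcc] at this
      rwa [SegPF.barDel_barIns hq4] at this
    exact Prod.ext e1 e2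
  rw [hXeq, Set.ncard_union_eq hdisj (hYfin.image _) (hYfin.image _),
    Set.ncard_image_of_injOn hinj0, Set.ncard_image_of_injOn hinj1]
  ring
end

section
/- Let n ≥ 2 and let λ be a partition of n with m_i parts equal to i for each i and ℓ = m_1 + m_2 + ⋯ + m_n parts in total. Then the number of nondecreasing prime parking functions of length n whose multiset of letter multiplicities equals the multiset of parts of λ satisfies (n−1) · #{such parking functions} = binom(n−1, ℓ) · ℓ!/(m_1! m_2! ⋯ m_n!). -/
namespace PPFAux


open List

/-- Prefix sums of `F ++ F`. -/
def S (F : List ℕ) (x : ℕ) : ℕ := ((F ++ F).take x).sum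

/-- goodness condition on prefix sums. -/
def GoodL (L : ℕ) (F : List ℕ) : Prop := ∀ b ∈ Finset.Icc 1 L, b + 1 ≤ (F.take b).sum

instance (L : ℕ) : DecidablePred (GoodL L) := fun F =>
  inferInstanceAs (Decidable (∀ b ∈ Finset.Icc 1 L, b + 1 ≤ (F.take b).sum))

def goodAt (F : List ℕ) (k : ℕ) : Prop :=
  ∀ y, 1 ≤ y → y ≤ F.length → S F k + (y + 1) ≤ S F (k + y)

lemma S_le_eq (F : List ℕ) {x : ℕ} (hx : x ≤ F.length) : S F x = (F.take x).sum := by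
  rw [S, List.take_append_of_le_length hx]

lemma doubled_drop (F : List ℕ) {k : ℕ} (hk : k ≤ F.length) :
    (F ++ F).drop k = F.rotate k ++ F.drop k := by
  rw [List.drop_append_of_le_length hk, List.rotate_eq_drop_append_take hk]
  have : F.drop k ++ F = F.drop k ++ (F.take k ++ F.drop k) := by
    rw [List.take_append_drop]
  rw [this, ← List.append_assoc]

lemma S_add_of_le (F : List ℕ) {k y : ℕ} (hk : k ≤ F.length) (hy : y ≤ F.length) :
    S F (k + y) = S F k + ((F.rotate k).take y).sum := by
  rw [S, S, List.take_add, List.sum_append]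
  congr 1
  rw [doubled_drop F hk, List.take_append_of_le_length]
  rwa [List.length_rotate]

lemma S_add_length (F : List ℕ) {x : ℕ} (hx : x ≤ F.length) :
    S F (x + F.length) = F.sum + S F x := by
  rw [Nat.add_comm x F.length, S, List.take_add, List.take_left, List.drop_left,
    List.sum_append, S, List.take_append_of_le_length hx]

def D (F : List ℕ) (x : ℕ) : ℤ := (S F x : ℤ) - x

lemma D_add_length (F : List ℕ) {x : ℕ} (hx : x ≤ F.length)
    (hsum : F.sum = F.length + 1) : D F (x + F.length) = D F x + 1 := by
  simp only [D, S_add_length F hx, hsum]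
  push_cast
  ring

lemma goodAt_iff_D (F : List ℕ) (k : ℕ) :
    goodAt F k ↔ ∀ y, 1 ≤ y → y ≤ F.length → D F k + 1 ≤ D F (k + y) := by
  unfold goodAt D
  constructor
  · intro h y h1 h2
    have := h y h1 h2
    push_cast
    omega
  · intro h y h1 h2
    have := h y h1 h2
    omega

lemma exists_goodAt (F : List ℕ) (hL : 1 ≤ F.length) (hsum : F.sum = F.length + 1) :
    ∃ k < F.length, goodAt F k := by
  set L := F.length with hLdef
  have hTne : (Finset.range L).Nonempty := ⟨0, Finset.mem_range.2 hL⟩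
  have hIne : ((Finset.range L).image (D F)).Nonempty := hTne.image _
  set m := ((Finset.range L).image (D F)).min' hIne with hm
  have hUne : ((Finset.range L).filter (fun j => D F j = m)).Nonempty := by
    obtain ⟨j, hj, hje⟩ := Finset.mem_image.1 (Finset.min'_mem _ hIne)
    exact ⟨j, Finset.mem_filter.2 ⟨hj, hje⟩⟩
  set k := ((Finset.range L).filter (fun j => D F j = m)).max' hUne with hk
  have hkmem := Finset.max'_mem _ hUne
  rw [Finset.mem_filter, Finset.mem_range] at hkmem
  obtain ⟨hkL, hkm⟩ := hkmem
  have hmin : ∀ j < L, m ≤ D F j := by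
    intro j hj
    exact Finset.min'_le _ _ (Finset.mem_image.2 ⟨j, Finset.mem_range.2 hj, rfl⟩)
  refine ⟨k, hkL, (goodAt_iff_D F k).2 ?_⟩
  intro y h1 h2
  rcases lt_or_ge (k + y) L with hz | hz
  · have hmle := hmin (k + y) hz
    have hne : D F (k + y) ≠ m := by
      intro he
      have : k + y ≤ k := Finset.le_max' _ _ (Finset.mem_filter.2 ⟨Finset.mem_range.2 hz, he⟩)
      omega
    rw [hkm]
    rcases lt_or_eq_of_le hmle with h | h
    · omega
    · exact absurd h.symm hne
  · have hx : k + y - L ≤ L := by omega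
    have hxe : (k + y - L) + L = k + y := by omega
    have := D_add_length F hx hsum
    rw [hxe] at this
    rw [this, hkm]
    have : m ≤ D F (k + y - L) := hmin _ (by omega)
    omega

lemma goodAt_unique_aux (F : List ℕ) (hsum : F.sum = F.length + 1) {k k' : ℕ}
    (hkk' : k < k') (hk' : k' < F.length) (h : goodAt F k) (h' : goodAt F k') : False := by
  set L := F.length with hLdef
  have h1 := h (k' - k) (by omega) (by omega)
  have h2 := h' (k + L - k') (by omega) (by omega)
  have he1 : k + (k' - k) = k' := by omega
  have he2 : k' + (k + L - k') = k + L := by omega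
  rw [he1] at h1
  rw [he2] at h2
  have h3 : S F (k + L) = F.sum + S F k := S_add_length F (le_of_lt (lt_trans hkk' hk'))
  rw [h3, hsum] at h2
  omega

lemma goodAt_unique (F : List ℕ) (hsum : F.sum = F.length + 1) {k k' : ℕ}
    (hk : k < F.length) (hk' : k' < F.length) (h : goodAt F k) (h' : goodAt F k') : k = k' := by
  rcases lt_trichotomy k k' with hlt | heq | hgt
  · exact absurd (goodAt_unique_aux F hsum hlt hk' h h') (fun x => x)
  · exact heq
  · exact absurd (goodAt_unique_aux F hsum hgt hk h' h) (fun x => x)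

lemma goodL_rotate_iff (F : List ℕ) {k : ℕ} (hk : k ≤ F.length) :
    GoodL F.length (F.rotate k) ↔ goodAt F k := by
  unfold GoodL goodAt
  constructor
  · intro h y h1 h2
    have := h y (Finset.mem_Icc.2 ⟨h1, h2⟩)
    have hS := S_add_of_le F hk h2
    omega
  · intro h b hb
    rw [Finset.mem_Icc] at hb
    have := h b hb.1 hb.2
    have hS := S_add_of_le F hk hb.2
    omega




open List

def _root_.Multiset.flists (μ : Multiset ℕ) : Finset (List ℕ) := (Multiset.lists μ).toFinset

theorem _root_.Multiset.mem_flists_iff (s : Multiset ℕ) (l : List ℕ) :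
    l ∈ s.flists ↔ s = ⟦l⟧ := by
  rw [Multiset.flists, Multiset.mem_toFinset, Multiset.mem_lists_iff]

lemma lists_eq_biUnion (μ : Multiset ℕ) (hμ : μ ≠ 0) :
    μ.flists = μ.toFinset.biUnion (fun a => ((μ.erase a).flists).image (a :: ·)) := by
  ext F
  simp only [Multiset.mem_flists_iff, Finset.mem_biUnion, Finset.mem_image,
    Multiset.mem_toFinset, Multiset.quot_mk_to_coe]
  constructor
  · intro hF
    cases F with
    | nil => exact absurd (by simpa using hF) hμ
    | cons a G =>
      refine ⟨a, by rw [hF, ← Multiset.cons_coe]; exact Multiset.mem_cons_self a _, G, ?_, rfl⟩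
      rw [hF, ← Multiset.cons_coe, Multiset.erase_cons_head]
  · rintro ⟨a, ha, G, hG, rfl⟩
    rw [← Multiset.cons_coe, ← hG, Multiset.cons_erase ha]

lemma lists_card_prod : ∀ (N : ℕ) (μ : Multiset ℕ), Multiset.card μ = N →
    ∀ s : Finset ℕ, μ.toFinset ⊆ s →
    μ.flists.card * ∏ a ∈ s, (μ.count a).factorial = N.factorial := by
  intro N
  induction N with
  | zero =>
    intro μ hμ s _
    rw [Multiset.card_eq_zero] at hμ
    subst hμ
    have h0 : (0 : Multiset ℕ) = ((([] : List ℕ) : Multiset ℕ)) := rfl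
    rw [h0, Multiset.flists, Multiset.lists_coe]
    simp [List.permutations_nil]
  | succ N ih =>
    intro μ hμ s hs
    have hμ0 : μ ≠ 0 := by
      intro h; rw [h] at hμ; simp at hμ
    rw [lists_eq_biUnion μ hμ0]
    rw [Finset.card_biUnion]
    · rw [Finset.sum_mul]
      have hterm : ∀ a ∈ μ.toFinset,
          (((μ.erase a).flists).image (a :: ·)).card * ∏ b ∈ s, (μ.count b).factorial
          = μ.count a * N.factorial := by
        intro a ha
        rw [Finset.card_image_of_injective _ (List.cons_injective)]
        have hamem : a ∈ μ := Multiset.mem_toFinset.1 ha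
        have has : a ∈ s := hs ha
        have hcount : 1 ≤ μ.count a := Multiset.one_le_count_iff_mem.2 hamem
        have hprod : ∏ b ∈ s, (μ.count b).factorial
            = μ.count a * ∏ b ∈ s, ((μ.erase a).count b).factorial := by
          rw [← Finset.mul_prod_erase s _ has, ← Finset.mul_prod_erase s
            (fun b => ((μ.erase a).count b).factorial) has]
          have h1 : ∏ x ∈ s.erase a, (μ.count x).factorial
              = ∏ x ∈ s.erase a, ((μ.erase a).count x).factorial := by
            apply Finset.prod_congr rfl
            intro x hx
            rw [Multiset.count_erase_of_ne (Finset.ne_of_mem_erase hx)]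
          rw [h1, Multiset.count_erase_self, ← Nat.mul_factorial_pred (Nat.one_le_iff_ne_zero.1 hcount), mul_assoc]
        rw [hprod, ← mul_assoc, mul_comm ((μ.erase a).flists.card) (μ.count a), mul_assoc,
          ih (μ.erase a) (by rw [Multiset.card_erase_of_mem hamem, hμ]; rfl) s
            (fun x hx => hs (Multiset.mem_toFinset.2
              (Multiset.mem_of_mem_erase (Multiset.mem_toFinset.1 hx))))]
      rw [Finset.sum_congr rfl hterm, ← Finset.sum_mul, Multiset.toFinset_sum_count_eq, hμ,
        Nat.factorial_succ]
    · intro x hx y hy hxy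
      rw [Function.onFun, Finset.disjoint_left]
      rintro F hFx hFy
      obtain ⟨G, _, rfl⟩ := Finset.mem_image.1 hFx
      obtain ⟨G', _, hG'⟩ := Finset.mem_image.1 hFy
      apply hxy
      injection hG'.symm with h1 h2




open List

/-- nondecreasing word with given letter multiplicities starting at `s`. -/
def blocks : List ℕ → ℕ → List ℕ
  | [], _ => []
  | c :: F, s => List.replicate c s ++ blocks F (s + 1)

lemma blocks_length : ∀ (F : List ℕ) (s : ℕ), (blocks F s).length = F.sum
  | [], _ => rfl
  | c :: F, s => by
    simp [blocks, blocks_length F (s + 1), List.sum_cons]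

lemma mem_blocks : ∀ (F : List ℕ) (s : ℕ), ∀ x ∈ blocks F s, s ≤ x ∧ x < s + F.length
  | [], _ => by simp [blocks]
  | c :: F, s => by
    intro x hx
    rw [blocks, List.mem_append] at hx
    rcases hx with h | h
    · have := List.eq_of_mem_replicate h
      subst this
      simp
    · have := mem_blocks F (s + 1) x h
      simp only [List.length_cons]
      omega

lemma blocks_sorted : ∀ (F : List ℕ) (s : ℕ), List.Pairwise (· ≤ ·) (blocks F s)
  | [], _ => by simp [blocks]
  | c :: F, s => by
    rw [blocks, List.pairwise_append]
    refine ⟨List.pairwise_replicate.2 (Or.inr le_rfl), blocks_sorted F (s + 1), ?_⟩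
    intro a ha b hb
    have ha' := List.eq_of_mem_replicate ha
    have hb' := (mem_blocks F (s + 1) b hb).1
    omega

lemma blocks_countP_le : ∀ (F : List ℕ) (s b : ℕ),
    (blocks F s).countP (fun x => x ≤ b) = (F.take (b + 1 - s)).sum
  | [], _, _ => by simp [blocks]
  | c :: F, s, b => by
    rw [blocks, List.countP_append, List.countP_replicate, blocks_countP_le F (s + 1) b]
    by_cases h : s ≤ b
    · have h1 : b + 1 - s = (b - s) + 1 := by omega
      have h2 : b + 1 - (s + 1) = b - s := by omega
      rw [h1, h2]
      simp only [List.take_succ_cons, List.sum_cons]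
      rw [if_pos (by simpa using h)]
    · have h1 : b + 1 - s = 0 := by omega
      have h2 : b + 1 - (s + 1) = 0 := by omega
      rw [h1, h2]
      simp only [List.take_zero, List.sum_nil]
      rw [if_neg (by simpa using h)]
      omega

lemma blocks_counts : ∀ (F : List ℕ) (s : ℕ),
    (List.range' s F.length).map (fun x => (blocks F s).count x) = F
  | [], _ => rfl
  | c :: F, s => by
    have hrange : List.range' s (c :: F).length = s :: List.range' (s + 1) F.length := by
      simp [List.range'_succ]
    rw [hrange, List.map_cons]
    congr 1
    · rw [blocks, List.count_append, List.count_replicate, if_pos (by simp)]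
      have : (blocks F (s + 1)).count s = 0 := by
        rw [List.count_eq_zero]
        intro h
        have := (mem_blocks F (s + 1) s h).1
        omega
      rw [this, Nat.add_zero]
    · have hmap : (List.range' (s + 1) F.length).map (fun x => (blocks (c :: F) s).count x)
          = (List.range' (s + 1) F.length).map (fun x => (blocks F (s + 1)).count x) := by
        apply List.map_congr_left
        intro x hx
        rw [List.mem_range'] at hx
        obtain ⟨i, hi, rfl⟩ := hx
        rw [blocks, List.count_append, List.count_replicate, if_neg (by simp; omega),
          Nat.zero_add]
      rw [hmap, blocks_counts F (s + 1)]

lemma countsplit (w : List ℕ) (b : ℕ) :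
    w.countP (fun x => x ≤ b + 1) = w.countP (fun x => x ≤ b) + w.count (b + 1) := by
  induction w with
  | nil => simp
  | cons a w ih =>
    rw [List.countP_cons, List.countP_cons, List.count_cons, ih]
    by_cases h1 : a ≤ b + 1 <;> by_cases h2 : a ≤ b <;> by_cases h3 : a = b + 1 <;>
      simp [h1, h2, h3, beq_iff_eq] <;> omega

lemma csum (w : List ℕ) (hw : ∀ x ∈ w, 1 ≤ x) :
    ∀ b : ℕ, ((List.range' 1 b).map (fun x => w.count x)).sum = w.countP (fun x => x ≤ b) := by
  intro b
  induction b with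
  | zero =>
    simp only [List.range'_zero, List.map_nil, List.sum_nil]
    symm
    rw [List.countP_eq_zero]
    intro a ha
    have := hw a ha
    simp
    omega
  | succ b ih =>
    have hconcat : List.range' 1 (b + 1) = List.range' 1 b ++ [1 + b] := by
      have := List.range'_concat (s := 1) (n := b) (step := 1)
      simpa using this
    rw [hconcat, List.map_append, List.sum_append, ih, countsplit]
    simp [Nat.add_comm 1 b]




open List

def phi (L : ℕ) (w : List ℕ) : List ℕ := (List.range' 1 L).map (fun x => w.count x)

lemma phi_length (L : ℕ) (w : List ℕ) : (phi L w).length = L := by simp [phi]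

lemma range'_split (L b : ℕ) (hb : b ≤ L) :
    List.range' 1 L = List.range' 1 b ++ List.range' (1 + b) (L - b) := by
  have h := List.range'_append (s := 1) (m := b) (n := L - b) (step := 1)
  rw [one_mul] at h
  conv_lhs => rw [show L = b + (L - b) by omega]
  exact h.symm

lemma phi_take (L : ℕ) (w : List ℕ) {b : ℕ} (hb : b ≤ L) :
    (phi L w).take b = phi b w := by
  unfold phi
  rw [range'_split L b hb, List.map_append, List.take_append_of_le_length (by simp),
    List.take_of_length_le (by simp)]

lemma phi_multiset (L : ℕ) (w : List ℕ) (hmem : ∀ x ∈ w, 1 ≤ x ∧ x ≤ L) :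
    Multiset.filter (fun c => ¬ c = 0) ↑(phi L w)
      = ↑(w.dedup.map (fun x => w.count x)) := by
  rw [Multiset.filter_coe]
  unfold phi
  rw [List.filter_map]
  have hperm : ((List.range' 1 L).filter ((fun b => decide ¬ b = 0) ∘ fun x => w.count x))
      ~ w.dedup := by
    rw [← Multiset.coe_eq_coe]
    rw [Multiset.Nodup.ext (Multiset.coe_nodup.2 ((List.nodup_range' (s := 1) (n := L)).filter _))
      (Multiset.coe_nodup.2 w.nodup_dedup)]
    intro a
    simp only [Multiset.mem_coe, List.mem_filter, List.mem_range'_1, List.mem_dedup,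
      Function.comp_apply, decide_eq_true_eq]
    constructor
    · rintro ⟨_, h⟩
      by_contra ha
      exact h (List.count_eq_zero.2 ha)
    · intro ha
      obtain ⟨h1, h2⟩ := hmem a ha
      refine ⟨⟨h1, by omega⟩, ?_⟩
      intro hc
      rw [List.count_eq_zero] at hc
      exact hc ha
  exact Multiset.coe_eq_coe.2 (hperm.map _)

lemma good_word_props (n : ℕ) (hn : 2 ≤ n) (w : List ℕ) (hlen : w.length = n)
    (hppf : IsPrimeParkingFunction w) :
    (∀ x ∈ w, 1 ≤ x ∧ x ≤ n - 1) ∧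
    (∀ b, 1 ≤ b → b ≤ n - 1 → b + 1 ≤ w.countP (fun x => x ≤ b)) := by
  have hpos : ∀ x ∈ w, 1 ≤ x := hppf.1.1
  have hcnt : ∀ b, 1 ≤ b → b ≤ n - 1 → b + 1 ≤ w.countP (fun x => x ≤ b) := by
    intro b h1 h2
    have hb := hppf.1.2 b h1 (by omega)
    rw [← List.countP_eq_length_filter] at hb
    rcases Nat.lt_or_ge b (w.countP (fun x => x ≤ b)) with h | h
    · omega
    · have heq : (w.filter (fun x => x ≤ b)).length = b := by
        rw [← List.countP_eq_length_filter]; omega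
      rcases hppf.2 b heq with h0 | h0 <;> omega
  refine ⟨?_, hcnt⟩
  intro x hx
  refine ⟨hpos x hx, ?_⟩
  have h := hcnt (n - 1) (by omega) le_rfl
  have h2 : w.countP (fun x => x ≤ n - 1) = w.length := by
    have := List.countP_le_length (p := fun x => decide (x ≤ n - 1)) (l := w)
    omega
  have := List.countP_eq_length.1 h2 x hx
  simpa using this

lemma multiset_card_le_sum : ∀ (m : Multiset ℕ), (∀ i ∈ m, 1 ≤ i) →
    Multiset.card m ≤ m.sum := by
  intro m
  induction m using Multiset.induction_on with
  | empty => simp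
  | cons a t ih =>
    intro h
    rw [Multiset.card_cons, Multiset.sum_cons]
    have h1 := h a (Multiset.mem_cons_self a t)
    have h2 := ih (fun i hi => h i (Multiset.mem_cons_of_mem hi))
    omega


lemma sum_take_le (F : List ℕ) (b : ℕ) : (F.take b).sum ≤ F.sum := by
  conv_rhs => rw [← List.take_append_drop b F]
  rw [List.sum_append]
  exact Nat.le_add_right _ _

end PPFAux

/-- Let `n ≥ 2` and let `λ` be a partition of `n` (a multiset of positive integers
of sum `n`), with `mᵢ = λ.count i` parts equal to `i` and `ℓ = λ.card` parts in
total. Then the number `N` of nondecreasing prime parking functions of length `n`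
whose multiset of letter multiplicities equals the multiset of parts of `λ`
satisfies `(n-1) · N = C(n-1, ℓ) · ℓ! / (m₁! m₂! ⋯ mₙ!)`. -/
theorem card_nondecreasing_prime_with_multiplicities (n : ℕ) (hn : 2 ≤ n)
    (lam : Multiset ℕ) (hpos : ∀ i ∈ lam, 1 ≤ i) (hsum : lam.sum = n) :
    (n - 1) *
      Set.ncard {w : List ℕ | w.length = n ∧ List.Pairwise (· ≤ ·) w ∧
        IsPrimeParkingFunction w ∧
        (↑(w.dedup.map fun x => w.count x) : Multiset ℕ) = lam} =
    (n - 1).choose (Multiset.card lam) *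
      (Nat.factorial (Multiset.card lam) /
        ∏ i ∈ Finset.Icc 1 n, Nat.factorial (lam.count i)) := by
  set WS : Set (List ℕ) := {w : List ℕ | w.length = n ∧ List.Pairwise (· ≤ ·) w ∧
        IsPrimeParkingFunction w ∧
        (↑(w.dedup.map fun x => w.count x) : Multiset ℕ) = lam} with hWS
  by_cases hcard : Multiset.card lam ≤ n - 1
  · -- main case
    set μ : Multiset ℕ := lam + Multiset.replicate (n - 1 - Multiset.card lam) 0 with hμ
    have hcardμ : Multiset.card μ = n - 1 := by
      rw [hμ, Multiset.card_add, Multiset.card_replicate]; omega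
    have hsumμ : μ.sum = n := by
      rw [hμ, Multiset.sum_add, Multiset.sum_replicate, hsum]; simp
    set goodF : Finset (List ℕ) := (μ.flists).filter (PPFAux.GoodL (n-1)) with hgoodF
    -- step 1 : ncard WS = goodF.card
    have key_img : (fun w => PPFAux.phi (n-1) w) '' WS = ↑goodF := by
      ext F
      rw [Set.mem_image, Finset.mem_coe, hgoodF, Finset.mem_filter,
        Multiset.mem_flists_iff, Multiset.quot_mk_to_coe]
      constructor
      · rintro ⟨w, hw, rfl⟩
        obtain ⟨hlen, hsort, hppf, hmul⟩ := hw
        have hprops := PPFAux.good_word_props n hn w hlen hppf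
        have hwmem := hprops.1
        have hcnt := hprops.2
        have hfilt := PPFAux.phi_multiset (n-1) w hwmem
        rw [hmul] at hfilt
        have hsplit := Multiset.filter_add_not (fun c => c = 0)
          ((PPFAux.phi (n-1) w : List ℕ) : Multiset ℕ)
        have heq0 := Multiset.filter_eq' ((PPFAux.phi (n-1) w : List ℕ) : Multiset ℕ) 0
        have hcards : Multiset.card ((PPFAux.phi (n-1) w : List ℕ) : Multiset ℕ) = n - 1 := by
          rw [Multiset.coe_card, PPFAux.phi_length]
        rw [heq0, hfilt] at hsplit
        have hcnt0 : Multiset.count 0 ((PPFAux.phi (n-1) w : List ℕ) : Multiset ℕ)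
            = n - 1 - Multiset.card lam := by
          have hc := congrArg Multiset.card hsplit
          rw [Multiset.card_add, Multiset.card_replicate, hcards] at hc
          omega
        have hμeq : ((PPFAux.phi (n-1) w : List ℕ) : Multiset ℕ) = μ := by
          rw [← hsplit, hcnt0, hμ, add_comm]
        refine ⟨hμeq.symm, ?_⟩
        unfold PPFAux.GoodL
        intro b hb
        rw [Finset.mem_Icc] at hb
        rw [PPFAux.phi_take (n-1) w hb.2]
        unfold PPFAux.phi
        rw [PPFAux.csum w (fun x hx => (hwmem x hx).1) b]
        exact hcnt b hb.1 hb.2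
      · rintro ⟨hFl, hFgood⟩
        have hμF : μ = ↑F := hFl
        have hFlen : F.length = n - 1 := by
          have h := congrArg Multiset.card hμF
          rw [Multiset.coe_card, hcardμ] at h
          omega
        have hFsum : F.sum = n := by
          have h := congrArg Multiset.sum hμF
          rw [Multiset.sum_coe, hsumμ] at h
          omega
        have hwmem : ∀ x ∈ PPFAux.blocks F 1, 1 ≤ x ∧ x ≤ n - 1 := by
          intro x hx
          have h := PPFAux.mem_blocks F 1 x hx
          rw [hFlen] at h
          omega
        have hphiF : PPFAux.phi (n-1) (PPFAux.blocks F 1) = F := by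
          unfold PPFAux.phi
          rw [← hFlen]
          exact PPFAux.blocks_counts F 1
        have hcp : ∀ b, (PPFAux.blocks F 1).countP (fun x => x ≤ b) = (F.take b).sum := by
          intro b
          have h := PPFAux.blocks_countP_le F 1 b
          simpa using h
        have hwlen : (PPFAux.blocks F 1).length = n := by
          rw [PPFAux.blocks_length, hFsum]
        refine ⟨PPFAux.blocks F 1, ⟨hwlen, PPFAux.blocks_sorted F 1, ?_, ?_⟩, hphiF⟩
        · -- prime parking function
          refine ⟨⟨fun x hx => (hwmem x hx).1, ?_⟩, ?_⟩
          · intro i h1 h2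
            rw [← List.countP_eq_length_filter, hcp]
            rcases le_or_gt i (n-1) with h | h
            · have := hFgood i (Finset.mem_Icc.2 ⟨h1, h⟩); omega
            · rw [List.take_of_length_le (by omega), hFsum]
              omega
          · intro b hb
            unfold IsBreakpoint at hb
            rw [← List.countP_eq_length_filter, hcp] at hb
            rcases Nat.eq_zero_or_pos b with h0 | h0
            · exact Or.inl h0
            rcases le_or_gt b (n-1) with h | h
            · have := hFgood b (Finset.mem_Icc.2 ⟨h0, h⟩); omega
            · refine Or.inr ?_
              rw [hwlen]
              have hle := PPFAux.sum_take_le F b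
              omega
        · -- multiset condition
          have hfilt := PPFAux.phi_multiset (n-1) (PPFAux.blocks F 1) hwmem
          rw [hphiF] at hfilt
          rw [← hfilt, ← hμF, hμ, Multiset.filter_add]
          have hA : Multiset.filter (fun c => ¬ c = 0) lam = lam :=
            Multiset.filter_eq_self.2 (fun a ha => by have := hpos a ha; omega)
          have hB : Multiset.filter (fun c => ¬ c = 0)
              (Multiset.replicate (n - 1 - Multiset.card lam) 0) = 0 :=
            Multiset.filter_eq_nil.2 (fun a ha => by
              rw [Multiset.eq_of_mem_replicate ha]; simp)
          rw [hA, hB, add_zero]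
    have hinj : Set.InjOn (fun w => PPFAux.phi (n-1) w) WS := by
      rintro w hw w' hw' he
      obtain ⟨hlen, hsort, hppf, hmul⟩ := hw
      obtain ⟨hlen', hsort', hppf', hmul'⟩ := hw'
      have hp := (PPFAux.good_word_props n hn w hlen hppf).1
      have hp' := (PPFAux.good_word_props n hn w' hlen' hppf').1
      simp only [PPFAux.phi] at he
      have hcnt := List.map_inj_left.1 he
      have hperm : w.Perm w' := by
        rw [← Multiset.coe_eq_coe]
        apply Multiset.ext.2
        intro a
        rw [Multiset.coe_count, Multiset.coe_count]
        by_cases ha : a ∈ List.range' 1 (n-1)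
        · exact hcnt a ha
        · have h1 : a ∉ w := by
            intro hmem
            obtain ⟨u1, u2⟩ := hp a hmem
            exact ha (List.mem_range'_1.2 ⟨u1, by omega⟩)
          have h2 : a ∉ w' := by
            intro hmem
            obtain ⟨u1, u2⟩ := hp' a hmem
            exact ha (List.mem_range'_1.2 ⟨u1, by omega⟩)
          rw [List.count_eq_zero.2 h1, List.count_eq_zero.2 h2]
      exact List.Perm.eq_of_pairwise' hsort hsort' hperm
    have h1 : Set.ncard WS = goodF.card := by
      rw [← Set.ncard_coe_finset, ← key_img, Set.ncard_image_of_injOn hinj]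
    -- step 2 : orbit decomposition
    have hbi : μ.flists = (Finset.range (n-1)).biUnion
        (fun k => goodF.image (fun F => F.rotate k)) := by
      ext F
      rw [Finset.mem_biUnion]
      constructor
      · intro hF
        have hμF : μ = ↑F := by
          rw [Multiset.mem_flists_iff, Multiset.quot_mk_to_coe] at hF
          exact hF
        have hFlen : F.length = n - 1 := by
          have h := congrArg Multiset.card hμF
          rw [Multiset.coe_card, hcardμ] at h
          omega
        have hFsum : F.sum = F.length + 1 := by
          have h := congrArg Multiset.sum hμF
          rw [Multiset.sum_coe, hsumμ] at h
          omega
        obtain ⟨k, hk, hgood⟩ := PPFAux.exists_goodAt F (by omega) hFsum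
        rw [hFlen] at hk
        refine ⟨(n-1-k) % (n-1), Finset.mem_range.2 (Nat.mod_lt _ (by omega)), ?_⟩
        rw [Finset.mem_image]
        refine ⟨F.rotate k, ?_, ?_⟩
        · rw [hgoodF, Finset.mem_filter]
          constructor
          · rw [Multiset.mem_flists_iff, Multiset.quot_mk_to_coe, hμF]
            exact (Multiset.coe_eq_coe.2 (F.rotate_perm k)).symm
          · have h := (PPFAux.goodL_rotate_iff F (by omega : k ≤ F.length)).2 hgood
            rw [hFlen] at h
            exact h
        · have hlenr : (F.rotate k).length = n - 1 := by rw [List.length_rotate, hFlen]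
          calc (F.rotate k).rotate ((n-1-k) % (n-1))
              = (F.rotate k).rotate (n-1-k) := by
                have h := List.rotate_mod (F.rotate k) (n-1-k)
                rw [hlenr] at h
                exact h
            _ = F.rotate (k + (n-1-k)) := List.rotate_rotate _ _ _
            _ = F.rotate F.length := by rw [hFlen]; congr 1; omega
            _ = F := List.rotate_length F
      · rintro ⟨k, hk, hFim⟩
        obtain ⟨G, hG, rfl⟩ := Finset.mem_image.1 hFim
        rw [hgoodF, Finset.mem_filter] at hG
        rw [Multiset.mem_flists_iff, Multiset.quot_mk_to_coe] at hG ⊢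
        rw [hG.1]
        exact (Multiset.coe_eq_coe.2 (G.rotate_perm k)).symm
    have hdisj : ∀ k ∈ Finset.range (n-1), ∀ k' ∈ Finset.range (n-1), k ≠ k' →
        Disjoint (goodF.image (fun F => F.rotate k))
          (goodF.image (fun F => F.rotate k')) := by
      intro k hk k' hk' hkk'
      rw [Finset.mem_range] at hk hk'
      rw [Finset.disjoint_left]
      rintro F hF1 hF2
      obtain ⟨G, hG, rfl⟩ := Finset.mem_image.1 hF1
      obtain ⟨G', hG', hGG⟩ := Finset.mem_image.1 hF2
      apply hkk'
      rw [hgoodF, Finset.mem_filter] at hG hG'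
      have hμG : μ = ↑G := by
        have h := hG.1
        rw [Multiset.mem_flists_iff, Multiset.quot_mk_to_coe] at h
        exact h
      have hGlen : G.length = n - 1 := by
        have h := congrArg Multiset.card hμG
        rw [Multiset.coe_card, hcardμ] at h
        omega
      have hGsum : G.sum = G.length + 1 := by
        have h := congrArg Multiset.sum hμG
        rw [Multiset.sum_coe, hsumμ] at h
        omega
      have hG'len : G'.length = n - 1 := by
        have h := congrArg List.length hGG
        rw [List.length_rotate, List.length_rotate] at h
        rw [h, hGlen]
      set j := (k + ((n-1) - k')) % (n-1) with hj
      have hjlt : j < n - 1 := Nat.mod_lt _ (by omega)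
      have hrot : G' = G.rotate j := by
        have h1 : G.rotate (k + ((n-1)-k')) = (G.rotate k).rotate ((n-1)-k') :=
          (List.rotate_rotate _ _ _).symm
        rw [← hGG, List.rotate_rotate] at h1
        have h2 : k' + ((n-1)-k') = n-1 := by omega
        rw [h2] at h1
        have h3 : G'.rotate (n-1) = G' := by
          conv_lhs => rw [← hG'len]
          exact List.rotate_length G'
        rw [h3] at h1
        have h4 := List.rotate_mod G (k + ((n-1)-k'))
        rw [hGlen] at h4
        rw [hj, h4, h1]
      have hga : PPFAux.goodAt G j := by
        have h := hG'.2
        rw [hrot] at h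
        rw [← hGlen] at h
        exact (PPFAux.goodL_rotate_iff G (by omega)).1 h
      have hga0 : PPFAux.goodAt G 0 := by
        have h0iff := PPFAux.goodL_rotate_iff G (Nat.zero_le G.length)
        rw [List.rotate_zero] at h0iff
        apply h0iff.1
        rw [hGlen]
        exact hG.2
      have huniq := PPFAux.goodAt_unique G hGsum (by omega : j < G.length)
        (by omega : 0 < G.length) hga hga0
      have hdvd : (n-1) ∣ (k + ((n-1)-k')) := by
        apply Nat.dvd_of_mod_eq_zero
        rw [← hj, huniq]
      obtain ⟨c, hc⟩ := hdvd
      have hc' : c = 0 ∨ c = 1 ∨ 2 ≤ c := by omega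
      rcases hc' with rfl | rfl | h2
      · omega
      · omega
      · exfalso
        have h2' : (n-1) * 2 ≤ (n-1) * c := Nat.mul_le_mul le_rfl h2
        rw [← hc] at h2'
        omega
    have h2 : (μ.flists).card = (n-1) * goodF.card := by
      rw [hbi, Finset.card_biUnion hdisj]
      rw [Finset.sum_congr rfl (fun k _ =>
        Finset.card_image_of_injective goodF (List.rotate_injective k))]
      rw [Finset.sum_const, Finset.card_range, smul_eq_mul]
    -- step 3 : counting all lists
    have hsub : μ.toFinset ⊆ insert 0 (Finset.Icc 1 n) := by
      intro a ha
      rw [Multiset.mem_toFinset, hμ, Multiset.mem_add] at ha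
      rcases ha with h | h
      · apply Finset.mem_insert_of_mem
        rw [Finset.mem_Icc]
        refine ⟨hpos a h, ?_⟩
        have := Multiset.single_le_sum (fun x _ => Nat.zero_le x) a h
        omega
      · rw [Multiset.eq_of_mem_replicate h]
        exact Finset.mem_insert_self _ _
    have h3 := PPFAux.lists_card_prod (n-1) μ hcardμ (insert 0 (Finset.Icc 1 n)) hsub
    rw [Finset.prod_insert (by simp)] at h3
    have hc0 : μ.count 0 = n - 1 - Multiset.card lam := by
      rw [hμ, Multiset.count_add, Multiset.count_replicate, if_pos rfl]
      have h : Multiset.count 0 lam = 0 := by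
        rw [Multiset.count_eq_zero]
        intro h0
        have := hpos 0 h0
        omega
      omega
    have hci : ∀ i ∈ Finset.Icc 1 n, μ.count i = lam.count i := by
      intro i hi
      rw [Finset.mem_Icc] at hi
      rw [hμ, Multiset.count_add, Multiset.count_replicate, if_neg (by omega), add_zero]
    rw [hc0, Finset.prod_congr rfl (fun i hi => by rw [hci i hi])] at h3
    -- step 4 : arithmetic
    set P := ∏ i ∈ Finset.Icc 1 n, Nat.factorial (lam.count i) with hP
    have hPpos : 0 < P := Finset.prod_pos (fun i _ => Nat.factorial_pos _)
    have hsum_count : ∑ i ∈ Finset.Icc 1 n, lam.count i = Multiset.card lam := by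
      rw [← Multiset.toFinset_sum_count_eq lam]
      symm
      apply Finset.sum_subset
      · intro a ha
        rw [Multiset.mem_toFinset] at ha
        rw [Finset.mem_Icc]
        refine ⟨hpos a ha, ?_⟩
        have := Multiset.single_le_sum (fun x _ => Nat.zero_le x) a ha
        omega
      · intro a _ ha
        rw [Multiset.mem_toFinset] at ha
        rw [Multiset.count_eq_zero]
        exact ha
    have hdvdP : P ∣ (Multiset.card lam).factorial := by
      have h := Nat.prod_factorial_dvd_factorial_sum (Finset.Icc 1 n) (fun i => lam.count i)
      rw [hsum_count] at h
      exact h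
    obtain ⟨q, hq⟩ := hdvdP
    have hqdiv : (Multiset.card lam).factorial / P = q := by
      rw [hq]
      exact Nat.mul_div_cancel_left q hPpos
    rw [h1, hqdiv]
    have hR : ((n-1).choose (Multiset.card lam) * q) *
        ((n - 1 - Multiset.card lam).factorial * P) = (n-1).factorial := by
      have key : ((n-1).choose (Multiset.card lam) * q) *
          ((n - 1 - Multiset.card lam).factorial * P)
          = (n-1).choose (Multiset.card lam) * (P * q) *
            (n - 1 - Multiset.card lam).factorial := by ring
      rw [key, ← hq, Nat.choose_mul_factorial_mul_factorial hcard]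
    have hLL : ((n-1) * goodF.card) *
        ((n - 1 - Multiset.card lam).factorial * P) = (n-1).factorial := by
      rw [← h2]
      exact h3
    have hpos2 : 0 < (n - 1 - Multiset.card lam).factorial * P :=
      Nat.mul_pos (Nat.factorial_pos _) hPpos
    exact Nat.eq_of_mul_eq_mul_right hpos2 (by rw [mul_assoc, ← mul_assoc] at hLL ⊢; rw [hLL, hR])
  · -- degenerate case : more parts than n-1
    have hchoose : (n-1).choose (Multiset.card lam) = 0 :=
      Nat.choose_eq_zero_of_lt (by omega)
    rw [hchoose, Nat.zero_mul]
    have hempty : WS = ∅ := by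
      rw [Set.eq_empty_iff_forall_notMem]
      rintro w ⟨hlen, hsort, hppf, hmul⟩
      have hprops := PPFAux.good_word_props n hn w hlen hppf
      have h2 : 2 ≤ w.countP (fun x => x ≤ 1) := hprops.2 1 le_rfl (by omega)
      have hc1 : w.countP (fun x => x ≤ 1) = w.count 1 := by
        rw [List.count_eq_countP]
        apply List.countP_congr
        intro x hx
        have := (hprops.1 x hx).1
        simp only [decide_eq_true_eq, beq_iff_eq]
        omega
      rw [hc1] at h2
      have hmem1 : (1:ℕ) ∈ w := by
        rw [← List.count_pos_iff]
        omega
      have hin : w.count 1 ∈ lam := by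
        rw [← hmul, Multiset.mem_coe]
        exact List.mem_map.2 ⟨1, List.mem_dedup.2 hmem1, rfl⟩
      obtain ⟨t, ht⟩ := Multiset.exists_cons_of_mem hin
      have htpos : ∀ i ∈ t, 1 ≤ i := fun i hi => hpos i (ht ▸ Multiset.mem_cons_of_mem hi)
      have hts := PPFAux.multiset_card_le_sum t htpos
      have hcards : Multiset.card lam = Multiset.card t + 1 := by
        rw [ht, Multiset.card_cons]
      have hsums : lam.sum = w.count 1 + t.sum := by rw [ht, Multiset.sum_cons]
      omega
    rw [hempty, Set.ncard_empty, Nat.mul_zero]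
end
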